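/- arXiv:2407.13051 — 8 statements merged into one kernel-verified Lean document; each statement's English description precedes it below -/
import Mathlib

section
/- Let (X,d) be a metric space, a ≤ b reals, and γ : [a,b] → X of bounded variation. Suppose φL, φR : [a,b] → [0,∞) satisfy: φL(a) = 0, φR(b) = 0, for every t ∈ (a,b] one has d(γ(s), γ(t)) → φL(t) as s → t from the left within [a,t), and for every t ∈ [a,b) one has d(γ(s), γ(t)) → φR(t) as s → t from the right within (t,b]. Then for every finite set F ⊆ [a,b] one has Σ_{t ∈ F} (φL(t) + φR(t)) ≤ V(γ). -/
/-!
Cut `[a, b]` at the points of `F` and at one extra point strictly between consecutive points of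
`F`. The left jump at `t` is a limit of `d(γ s, γ t)` with `s` in the piece ending at `t`, so it
is at most the variation on that piece; likewise for the right jump, and the variations of the
pieces add up to `V(γ)`.
-/

open Set Filter Topology
open scoped ENNReal

theorem Finset.exists_between_of_forall_lt {α : Type*} [LinearOrder α] [DenselyOrdered α]
    {s : Finset α} {a m : α} (ham : a < m) (hs : ∀ x ∈ s, x < m) :
    ∃ u ∈ Set.Ico a m, ∀ x ∈ s, x < u := by
  rcases s.eq_empty_or_nonempty with rfl | hne
  · exact ⟨a, ⟨le_rfl, ham⟩, by simp⟩
  · obtain ⟨u, hlt, hum⟩ := _root_.exists_between (max_lt ham (hs _ (s.max'_mem hne)))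
    exact ⟨u, ⟨(le_max_left _ _).trans hlt.le, hum⟩,
      fun x hx => ((s.le_max' x hx).trans (le_max_right _ _)).trans_lt hlt⟩

namespace eVariationOn

variable {α E : Type*} [LinearOrder α] [PseudoEMetricSpace E]

theorem Icc_add_Icc_of_le (f : α → E) {a b c : α} (hab : a ≤ b) (hbc : b ≤ c) :
    eVariationOn f (Icc a b) + eVariationOn f (Icc b c) = eVariationOn f (Icc a c) := by
  simpa using eVariationOn.Icc_add_Icc f (s := univ) hab hbc (mem_univ b)

theorem ofReal_le_of_tendsto_dist {E : Type*} [PseudoMetricSpace E] {f : α → E} {s : Set α}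
    {t : α} {l : Filter α} [l.NeBot] {ℓ : ℝ}
    (hf : Tendsto (fun x => dist (f x) (f t)) l (𝓝 ℓ)) (hl : ∀ᶠ x in l, x ∈ s) (ht : t ∈ s) :
    ENNReal.ofReal ℓ ≤ eVariationOn f s := by
  refine le_of_tendsto ((ENNReal.continuous_ofReal.tendsto ℓ).comp hf) ?_
  filter_upwards [hl] with x hx
  simpa [← edist_dist] using eVariationOn.edist_le f hx ht

/-- The right end `v` may lie in `F` only when `v = b`, since otherwise there is no interval to
the right of `v` to absorb `jR v`. -/
theorem sum_jumps_le [DenselyOrdered α] (f : α → E) {a b : α} (jL jR : α → ℝ≥0∞)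
    (hLa : jL a = 0) (hRb : jR b = 0)
    (hL : ∀ t ∈ Ioc a b, ∀ u ∈ Ico a t, jL t ≤ eVariationOn f (Icc u t))
    (hR : ∀ t ∈ Ico a b, ∀ v ∈ Ioc t b, jR t ≤ eVariationOn f (Icc t v))
    (F : Finset α) {v : α} (hvb : v ≤ b) (hF : ↑F ⊆ Icc a v) (hvF : v ∈ F → v = b) :
    ∑ t ∈ F, (jL t + jR t) ≤ eVariationOn f (Icc a v) := by
  classical
  induction F using Finset.induction_on_max generalizing v with
  | empty => simp
  | insert m s hsm ih =>
    obtain ⟨ham, hmv⟩ : m ∈ Icc a v := hF (Finset.mem_insert_self m s)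
    have hsv : ↑s ⊆ Icc a v := fun x hx => hF (Finset.mem_insert_of_mem hx)
    obtain ⟨u, ⟨hau, hum⟩, hsu, hm⟩ : ∃ u ∈ Icc a m, (∀ x ∈ s, x < u) ∧ (u < m ∨ m = a) := by
      rcases ham.lt_or_eq with ham | rfl
      · obtain ⟨u, hu, hsu⟩ := s.exists_between_of_forall_lt ham hsm
        exact ⟨u, Ico_subset_Icc_self hu, hsu, Or.inl hu.2⟩
      · exact ⟨a, ⟨le_rfl, le_rfl⟩, hsm, Or.inr rfl⟩
    have hs : ∑ t ∈ s, (jL t + jR t) ≤ eVariationOn f (Icc a u) :=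
      ih (hum.trans (hmv.trans hvb)) (fun x hx => ⟨(hsv hx).1, (hsu x hx).le⟩)
        (fun hu => absurd (hsu u hu) (lt_irrefl u))
    have hjL : jL m ≤ eVariationOn f (Icc u m) := by
      rcases hm with hum | hma
      · exact hL m ⟨hau.trans_lt hum, hmv.trans hvb⟩ u ⟨hau, hum⟩
      · simp [hma, hLa]
    have hjR : jR m ≤ eVariationOn f (Icc m v) := by
      rcases hmv.lt_or_eq with hmv | rfl
      · exact hR m ⟨ham, hmv.trans_le hvb⟩ v ⟨hmv, hvb⟩
      · simp [hvF (Finset.mem_insert_self m s), hRb]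
    calc ∑ t ∈ insert m s, (jL t + jR t)
        = ∑ t ∈ s, (jL t + jR t) + (jL m + jR m) := by
          rw [Finset.sum_insert fun hm => lt_irrefl m (hsm m hm), add_comm]
      _ ≤ eVariationOn f (Icc a u) + (eVariationOn f (Icc u m) + eVariationOn f (Icc m v)) := by
          gcongr
      _ = eVariationOn f (Icc a v) := by
          rw [Icc_add_Icc_of_le f hum hmv, Icc_add_Icc_of_le f hau (hum.trans hmv)]

end eVariationOn

theorem stmt4_general {X : Type*} [MetricSpace X] {a b : ℝ}
    (γ : ℝ → X) (hγ : BoundedVariationOn γ (Set.Icc a b))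
    (φL φR : ℝ → ℝ)
    (hLa : φL a = 0) (hRb : φR b = 0)
    (hL : ∀ t ∈ Set.Ioc a b,
        Filter.Tendsto (fun s => dist (γ s) (γ t))
          (nhdsWithin t (Set.Ico a t)) (nhds (φL t)))
    (hR : ∀ t ∈ Set.Ico a b,
        Filter.Tendsto (fun s => dist (γ s) (γ t))
          (nhdsWithin t (Set.Ioc t b)) (nhds (φR t))) :
    ∀ F : Finset ℝ, ↑F ⊆ Set.Icc a b →
      ∑ t ∈ F, (φL t + φR t) ≤ (eVariationOn γ (Set.Icc a b)).toReal := by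
  intro F hF
  have hjL : ∀ t ∈ Ioc a b, ∀ u ∈ Ico a t, ENNReal.ofReal (φL t) ≤ eVariationOn γ (Icc u t) :=
    fun t ht u hu =>
      haveI := right_nhdsWithin_Ico_neBot ht.1
      eVariationOn.ofReal_le_of_tendsto_dist (hL t ht)
        (by filter_upwards [mem_nhdsWithin_of_mem_nhds (Ioi_mem_nhds hu.2), self_mem_nhdsWithin]
          with s hus hst using ⟨hus.le, hst.2.le⟩) ⟨hu.2.le, le_rfl⟩
  have hjR : ∀ t ∈ Ico a b, ∀ v ∈ Ioc t b, ENNReal.ofReal (φR t) ≤ eVariationOn γ (Icc t v) :=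
    fun t ht v hv =>
      haveI := left_nhdsWithin_Ioc_neBot ht.2
      eVariationOn.ofReal_le_of_tendsto_dist (hR t ht)
        (by filter_upwards [mem_nhdsWithin_of_mem_nhds (Iio_mem_nhds hv.1), self_mem_nhdsWithin]
          with s hsv hts using ⟨hts.1.le, hsv.le⟩) ⟨le_rfl, hv.1.le⟩
  rw [← ENNReal.ofReal_le_iff_le_toReal hγ]
  calc ENNReal.ofReal (∑ t ∈ F, (φL t + φR t))
      ≤ ∑ t ∈ F, ENNReal.ofReal (φL t + φR t) :=
        Finset.le_sum_of_subadditive _ ENNReal.ofReal_zero.le (fun _ _ => ENNReal.ofReal_add_le) _ _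
    _ ≤ ∑ t ∈ F, (ENNReal.ofReal (φL t) + ENNReal.ofReal (φR t)) :=
        Finset.sum_le_sum fun _ _ => ENNReal.ofReal_add_le
    _ ≤ eVariationOn γ (Icc a b) :=
        eVariationOn.sum_jumps_le γ _ _ (by simp [hLa]) (by simp [hRb]) hjL hjR F le_rfl hF
          fun _ => rfl

/-- For a function of bounded variation on `[a,b]`, the sum of the
left-jumps and right-jumps over any finite set of points is bounded by the
variation. -/
theorem stmt4 {X : Type*} [MetricSpace X] {a b : ℝ} (hab : a ≤ b)
    (γ : ℝ → X) (hγ : BoundedVariationOn γ (Set.Icc a b))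
    (φL φR : ℝ → ℝ)
    (hL0 : ∀ t ∈ Set.Icc a b, 0 ≤ φL t) (hR0 : ∀ t ∈ Set.Icc a b, 0 ≤ φR t)
    (hLa : φL a = 0) (hRb : φR b = 0)
    (hL : ∀ t ∈ Set.Ioc a b,
        Filter.Tendsto (fun s => dist (γ s) (γ t))
          (nhdsWithin t (Set.Ico a t)) (nhds (φL t)))
    (hR : ∀ t ∈ Set.Ico a b,
        Filter.Tendsto (fun s => dist (γ s) (γ t))
          (nhdsWithin t (Set.Ioc t b)) (nhds (φR t))) :
    ∀ F : Finset ℝ, ↑F ⊆ Set.Icc a b →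
      ∑ t ∈ F, (φL t + φR t) ≤ (eVariationOn γ (Set.Icc a b)).toReal :=
  stmt4_general γ hγ φL φR hLa hRb hL hR
end

section
/- Let (X,d) be a metric space, a ≤ b reals, and γ : [a,b] → X of bounded variation that is right-continuous on [a,b). Then for every ε > 0 there exists δ > 0 such that for all r, t ∈ [a,b] with r < t and t − r ≤ δ, and for every s ∈ [r,t], one has d(γ(r), γ(s)) + d(γ(s), γ(t)) ≤ d(γ(r), γ(t)) + ε. -/
open Set

private lemma aux_dist_le {X : Type*} [MetricSpace X] {a b : ℝ}
    (γ : ℝ → X) (hγ : BoundedVariationOn γ (Set.Icc a b)) {x y : ℝ}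
    (hx : x ∈ Set.Icc a b) (hy : y ∈ Set.Icc a b) (hxy : x ≤ y) :
    dist (γ x) (γ y) ≤ variationOnFromTo γ (Set.Icc a b) x y := by
  rw [variationOnFromTo.eq_of_le _ _ hxy]
  exact BoundedVariationOn.dist_le (hγ.mono Set.inter_subset_left)
    ⟨hx, le_refl x, hxy⟩ ⟨hy, hxy, le_refl y⟩

private lemma aux_excess_mono {X : Type*} [MetricSpace X] {a b : ℝ}
    (γ : ℝ → X) (hγ : BoundedVariationOn γ (Set.Icc a b)) {c r t d : ℝ}
    (hc : c ∈ Set.Icc a b) (hr : r ∈ Set.Icc a b) (ht : t ∈ Set.Icc a b)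
    (hd : d ∈ Set.Icc a b) (hcr : c ≤ r) (hrt : r ≤ t) (htd : t ≤ d) :
    variationOnFromTo γ (Set.Icc a b) r t - dist (γ r) (γ t) ≤
      variationOnFromTo γ (Set.Icc a b) c d - dist (γ c) (γ d) := by
  have hlbv : LocallyBoundedVariationOn γ (Set.Icc a b) :=
    hγ.locallyBoundedVariationOn
  have h1 : variationOnFromTo γ (Set.Icc a b) c r
      + variationOnFromTo γ (Set.Icc a b) r d = variationOnFromTo γ (Set.Icc a b) c d :=
    variationOnFromTo.add hlbv hc hr hd
  have h2 : variationOnFromTo γ (Set.Icc a b) r t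
      + variationOnFromTo γ (Set.Icc a b) t d = variationOnFromTo γ (Set.Icc a b) r d :=
    variationOnFromTo.add hlbv hr ht hd
  have h3 : dist (γ c) (γ r) ≤ variationOnFromTo γ (Set.Icc a b) c r :=
    aux_dist_le γ hγ hc hr hcr
  have h4 : dist (γ t) (γ d) ≤ variationOnFromTo γ (Set.Icc a b) t d :=
    aux_dist_le γ hγ ht hd htd
  have h5 : dist (γ c) (γ d) ≤ dist (γ c) (γ r) + dist (γ r) (γ t) + dist (γ t) (γ d) :=
    dist_triangle4 _ _ _ _
  linarith

/-- A right-continuous function of bounded variation on `[a,b]`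
satisfies a uniform almost-additivity property of the triangle inequality on
small subintervals. -/
theorem stmt6 {X : Type*} [MetricSpace X] {a b : ℝ} (hab : a ≤ b)
    (γ : ℝ → X) (hγ : BoundedVariationOn γ (Set.Icc a b))
    (hrc : ∀ t ∈ Set.Ico a b,
      Filter.Tendsto γ (nhdsWithin t (Set.Ioc t b)) (nhds (γ t))) :
    ∀ ε > (0 : ℝ), ∃ δ > (0 : ℝ), ∀ r ∈ Set.Icc a b, ∀ t ∈ Set.Icc a b,
      r < t → t - r ≤ δ → ∀ s ∈ Set.Icc r t,
        dist (γ r) (γ s) + dist (γ s) (γ t) ≤ dist (γ r) (γ t) + ε := by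
  classical
  intro ε hε
  rcases eq_or_lt_of_le hab with rfl | hab'
  · exact ⟨1, one_pos, fun r hr t ht hrt _ => absurd hrt (not_lt.2 (ht.2.trans hr.1))⟩
  set V : ℝ → ℝ → ℝ := variationOnFromTo γ (Set.Icc a b) with hV
  have hlbv : LocallyBoundedVariationOn γ (Set.Icc a b) := hγ.locallyBoundedVariationOn
  -- Step 1 : a near-optimal partition
  obtain ⟨n, u, hu_mono, hu_mem, hu_sum⟩ : ∃ n, ∃ u : ℕ → ℝ, Monotone u ∧
      (∀ i, u i ∈ Set.Icc a b) ∧ (eVariationOn γ (Set.Icc a b)).toReal ≤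
        (∑ i ∈ Finset.range n, dist (γ (u (i + 1))) (γ (u i))) + ε / 4 := by
    by_cases hΘ : eVariationOn γ (Set.Icc a b) = 0
    · refine ⟨0, fun _ => a, monotone_const, fun _ => ⟨le_refl a, hab⟩, ?_⟩
      simp [hΘ]
      positivity
    · have hc0 : ENNReal.ofReal (ε / 4) ≠ 0 := by
        simp [ENNReal.ofReal_eq_zero]
        linarith
      have h1 : eVariationOn γ (Set.Icc a b) - ENNReal.ofReal (ε / 4)
          < eVariationOn γ (Set.Icc a b) := ENNReal.sub_lt_self hγ hΘ hc0
      rw [eVariationOn] at h1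
      rw [lt_iSup_iff] at h1
      obtain ⟨⟨n, u, hu_mono, hu_mem⟩, hp⟩ := h1
      refine ⟨n, u, hu_mono, hu_mem, ?_⟩
      have hsum_le : (∑ i ∈ Finset.range n, edist (γ (u (i + 1))) (γ (u i)))
          ≤ eVariationOn γ (Set.Icc a b) := eVariationOn.sum_le (f := γ) (n := n) hu_mono hu_mem
      have hsum_ne : (∑ i ∈ Finset.range n, edist (γ (u (i + 1))) (γ (u i))) ≠ ⊤ :=
        (hsum_le.trans_lt (lt_top_iff_ne_top.2 hγ)).ne
      have h2 : eVariationOn γ (Set.Icc a b) ≤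
          (∑ i ∈ Finset.range n, edist (γ (u (i + 1))) (γ (u i))) + ENNReal.ofReal (ε / 4) :=
        tsub_le_iff_right.mp hp.le
      have h3 := ENNReal.toReal_mono (by
        exact ENNReal.add_ne_top.2 ⟨hsum_ne, ENNReal.ofReal_ne_top⟩) h2
      rw [ENNReal.toReal_add hsum_ne ENNReal.ofReal_ne_top, ENNReal.toReal_ofReal (by linarith),
        ENNReal.toReal_sum (fun i _ => edist_ne_top _ _)] at h3
      simpa [dist_edist] using h3
  -- Step 2 : extend partition with endpoints
  set m : ℕ := n + 2 with hm
  set p : ℕ → ℝ := fun i => if i = 0 then a else if i ≤ n + 1 then u (i - 1) else b with hpdef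
  have hp0 : p 0 = a := by simp [hpdef]
  have hpm : p m = b := by
    simp only [hpdef, hm]
    rw [if_neg (by omega), if_neg (by omega)]
  have hp_mem : ∀ i, p i ∈ Set.Icc a b := by
    intro i
    simp only [hpdef]
    split_ifs
    · exact ⟨le_refl a, hab⟩
    · exact hu_mem _
    · exact ⟨hab, le_refl b⟩
  have hp_mono : Monotone p := by
    apply monotone_nat_of_le_succ
    intro i
    simp only [hpdef]
    split_ifs with h1 h2 h3 h4 h5 h6 <;>
      first
        | contradiction
        | omega
        | exact le_refl _
        | exact (hu_mem _).1
        | exact hab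
        | exact hu_mono (by omega)
        | exact (hu_mem _).2
  -- Step 3 : the extended partition sum dominates the original one
  have hp1 : ∀ i, i ≤ n → p (i + 1) = u i := by
    intro i hi
    simp only [hpdef]
    rw [if_neg (by omega), if_pos (by omega)]
    congr 1
  have hsum_ext : (eVariationOn γ (Set.Icc a b)).toReal ≤
      (∑ i ∈ Finset.range m, dist (γ (p i)) (γ (p (i + 1)))) + ε / 4 := by
    have hpeel : ∑ i ∈ Finset.range m, dist (γ (p i)) (γ (p (i + 1)))
        = (∑ i ∈ Finset.range n, dist (γ (p (i + 1))) (γ (p (i + 1 + 1))))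
          + dist (γ (p 0)) (γ (p 1)) + dist (γ (p (n + 1))) (γ (p (n + 2))) := by
      rw [hm, Finset.sum_range_succ, Finset.sum_range_succ']
    have hcong : ∀ i ∈ Finset.range n,
        dist (γ (p (i + 1))) (γ (p (i + 1 + 1))) = dist (γ (u (i + 1))) (γ (u i)) := by
      intro i hi
      rw [Finset.mem_range] at hi
      rw [hp1 i (by omega), hp1 (i + 1) (by omega), dist_comm]
    rw [hpeel, Finset.sum_congr rfl hcong]
    have := dist_nonneg (x := γ (p 0)) (y := γ (p 1))
    have := dist_nonneg (x := γ (p (n + 1))) (y := γ (p (n + 2)))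
    linarith
  -- Step 4 : additivity and the per-cell excess bound
  have hVab : V a b = (eVariationOn γ (Set.Icc a b)).toReal := by
    rw [hV, variationOnFromTo.eq_of_le _ _ hab, Set.inter_self]
  have hadd : ∀ k : ℕ, V (p 0) (p k) = ∑ i ∈ Finset.range k, V (p i) (p (i + 1)) := by
    intro k
    induction k with
    | zero => simp [hV, variationOnFromTo.self]
    | succ k ih =>
        rw [Finset.sum_range_succ, ← ih, hV,
          variationOnFromTo.add hlbv (hp_mem 0) (hp_mem k) (hp_mem (k + 1))]
  have hcell : ∀ i, i < m → V (p i) (p (i + 1)) ≤ dist (γ (p i)) (γ (p (i + 1))) + ε / 4 := by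
    intro i hi
    have him : i ∈ Finset.range m := Finset.mem_range.2 hi
    have hVsum : ∑ j ∈ Finset.range m, V (p j) (p (j + 1)) ≤
        (∑ j ∈ Finset.range m, dist (γ (p j)) (γ (p (j + 1)))) + ε / 4 := by
      rw [← hadd m, hp0, hpm, hVab]
      exact hsum_ext
    have herase : ∀ j ∈ (Finset.range m).erase i,
        dist (γ (p j)) (γ (p (j + 1))) ≤ V (p j) (p (j + 1)) := by
      intro j _
      exact aux_dist_le γ hγ (hp_mem j) (hp_mem (j + 1)) (hp_mono (Nat.le_succ j))
    have h1 : ∑ j ∈ (Finset.range m).erase i, dist (γ (p j)) (γ (p (j + 1))) ≤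
        ∑ j ∈ (Finset.range m).erase i, V (p j) (p (j + 1)) := Finset.sum_le_sum herase
    have h2 : dist (γ (p i)) (γ (p (i + 1)))
        + ∑ j ∈ (Finset.range m).erase i, dist (γ (p j)) (γ (p (j + 1)))
        = ∑ j ∈ Finset.range m, dist (γ (p j)) (γ (p (j + 1))) :=
      Finset.add_sum_erase _ (fun j => dist (γ (p j)) (γ (p (j + 1)))) him
    have h3 : V (p i) (p (i + 1)) + ∑ j ∈ (Finset.range m).erase i, V (p j) (p (j + 1))
        = ∑ j ∈ Finset.range m, V (p j) (p (j + 1)) :=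
      Finset.add_sum_erase _ (fun j => V (p j) (p (j + 1))) him
    linarith
  -- Step 5 : minimal positive gap of the partition
  have hGne : ∃ i ∈ Finset.range m, p i < p (i + 1) := by
    by_contra h
    push_neg at h
    have hk : ∀ k, k ≤ m → p k ≤ a := by
      intro k
      induction k with
      | zero => intro _; rw [hp0]
      | succ k ih =>
          intro hk1
          exact le_trans (h k (Finset.mem_range.2 (by omega))) (ih (by omega))
    have := hk m le_rfl
    rw [hpm] at this
    exact absurd this (not_le.2 hab')
  set G : Finset ℕ := (Finset.range m).filter (fun i => p i < p (i + 1)) with hG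
  have hGne' : G.Nonempty := by
    obtain ⟨i, hi1, hi2⟩ := hGne
    exact ⟨i, Finset.mem_filter.2 ⟨hi1, hi2⟩⟩
  set δgap : ℝ := G.inf' hGne' (fun i => p (i + 1) - p i) with hδgap
  have hδgap_pos : 0 < δgap := by
    rw [hδgap, Finset.lt_inf'_iff]
    intro i hi
    have := (Finset.mem_filter.1 hi).2
    linarith
  have hδgap_le : ∀ i, i < m → p i < p (i + 1) → δgap ≤ p (i + 1) - p i := by
    intro i hi1 hi2
    exact Finset.inf'_le _ (Finset.mem_filter.2 ⟨Finset.mem_range.2 hi1, hi2⟩)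
  -- Step 6 : right-continuity moduli at the partition points
  have hmod : ∀ i : ℕ, ∃ d > (0 : ℝ), ∀ x ∈ Set.Ioc (p i) b,
      dist x (p i) < d → dist (γ x) (γ (p i)) < ε / 8 := by
    intro i
    by_cases hib : p i < b
    · have h := hrc (p i) ⟨(hp_mem i).1, hib⟩
      rw [Metric.tendsto_nhdsWithin_nhds] at h
      obtain ⟨d, hd, hdd⟩ := h (ε / 8) (by linarith)
      exact ⟨d, hd, fun x hx hxd => hdd hx hxd⟩
    · exact ⟨1, one_pos, fun x hx _ =>
        absurd (hx.2.trans (not_lt.1 hib)) (not_le.2 hx.1)⟩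
  choose dmod hdmod_pos hdmod using hmod
  set δrc : ℝ := (Finset.range (m + 1)).inf' (show (Finset.range (m + 1)).Nonempty from ⟨0, Finset.mem_range.2 (by omega)⟩) dmod with hδrc
  have hδrc_pos : 0 < δrc := by
    rw [hδrc, Finset.lt_inf'_iff]
    intro i _
    exact hdmod_pos i
  have hδrc_le : ∀ i, i ≤ m → δrc ≤ dmod i := by
    intro i hi
    exact Finset.inf'_le _ (Finset.mem_range.2 (by omega))
  -- Step 7 : conclusion
  refine ⟨min δgap δrc, lt_min hδgap_pos hδrc_pos, ?_⟩
  intro r hr t ht hrt hδ s hs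
  have hsa : s ∈ Set.Icc a b := ⟨hr.1.trans hs.1, hs.2.trans ht.2⟩
  have hlow : dist (γ r) (γ s) + dist (γ s) (γ t) ≤ V r t := by
    have h1 : dist (γ r) (γ s) ≤ V r s := aux_dist_le γ hγ hr hsa hs.1
    have h2 : dist (γ s) (γ t) ≤ V s t := aux_dist_le γ hγ hsa ht hs.2
    have h3 : V r s + V s t = V r t := variationOnFromTo.add hlbv hr hsa ht
    linarith
  suffices hup : V r t ≤ dist (γ r) (γ t) + ε by linarith
  -- locate r in the partition
  set P : ℕ → Prop := fun i => p i ≤ r with hP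
  set j : ℕ := Nat.findGreatest P m with hj
  have hPj : p j ≤ r := Nat.findGreatest_spec (Nat.zero_le m) (show P 0 from by show p 0 ≤ r; rw [hp0]; exact hr.1)
  have hj_le : j ≤ m := by rw [hj]; exact Nat.findGreatest_le m
  have hjm : j < m := by
    rcases lt_or_eq_of_le hj_le with h | h
    · exact h
    · exfalso
      rw [h, hpm] at hPj
      exact absurd (hrt.trans_le ht.2) (not_lt.2 hPj)
  have hrj1 : r < p (j + 1) := by
    have := Nat.findGreatest_is_greatest (lt_of_le_of_lt (le_refl j) (Nat.lt_succ_self j)) hjm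
    exact not_le.1 this
  by_cases hcase : t ≤ p (j + 1)
  · have h1 := aux_excess_mono γ hγ (hp_mem j) hr ht (hp_mem (j + 1)) hPj hrt.le hcase
    have h2 := hcell j hjm
    linarith
  · push_neg at hcase
    set q : ℝ := p (j + 1) with hq
    have hq_mem : q ∈ Set.Icc a b := hp_mem (j + 1)
    -- locate q in the partition
    set Q : ℕ → Prop := fun i => p i ≤ q with hQ
    set k : ℕ := Nat.findGreatest Q m with hk
    have hk_ge : j + 1 ≤ k := Nat.le_findGreatest hjm (le_refl q)
    have hPk : p k ≤ q := Nat.findGreatest_spec (Nat.zero_le m)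
      (show Q 0 from by show p 0 ≤ q; rw [hp0]; exact hq_mem.1)
    have hpk_eq : p k = q := le_antisymm hPk (hp_mono hk_ge)
    have hk_le : k ≤ m := by rw [hk]; exact Nat.findGreatest_le m
    have hkm : k < m := by
      rcases lt_or_eq_of_le hk_le with h | h
      · exact h
      · exfalso
        rw [h, hpm] at hpk_eq
        have : t ≤ q := by rw [← hpk_eq]; exact ht.2
        linarith
    have hq_lt : q < p (k + 1) := by
      have := Nat.findGreatest_is_greatest (Nat.lt_succ_self k) hkm
      exact not_le.1 this
    have hgap : δgap ≤ p (k + 1) - p k := hδgap_le k hkm (by rw [hpk_eq]; exact hq_lt)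
    have hδ1 : t - r ≤ δgap := hδ.trans (min_le_left _ _)
    have hδ2 : t - r ≤ δrc := hδ.trans (min_le_right _ _)
    have ht_le : t ≤ p (k + 1) := by
      rw [hpk_eq] at hgap
      linarith
    -- the two cell estimates
    have hVrq : V r q - dist (γ r) (γ q) ≤ ε / 4 := by
      have h1 := aux_excess_mono γ hγ (hp_mem j) hr hq_mem (hp_mem (j + 1)) hPj hrj1.le
        (le_refl q)
      have h2 := hcell j hjm
      linarith
    have hVqt : V q t - dist (γ q) (γ t) ≤ ε / 4 := by
      have h1 := aux_excess_mono γ hγ (hp_mem k) hq_mem ht (hp_mem (k + 1)) hpk_eq.le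
        hcase.le ht_le
      have h2 := hcell k hkm
      rw [hpk_eq] at h1 h2
      linarith
    -- right continuity at q
    have hqt_small : dist (γ q) (γ t) < ε / 8 := by
      have hd : dist t (p k) < dmod k := by
        rw [hpk_eq, Real.dist_eq, abs_of_pos (by linarith)]
        have := hδrc_le k hkm.le
        linarith
      have := hdmod k t (by rw [hpk_eq]; exact ⟨hcase, ht.2⟩) hd
      rw [hpk_eq] at this
      rw [dist_comm]
      exact this
    have hVsplit : V r q + V q t = V r t := variationOnFromTo.add hlbv hr hq_mem ht
    have htri : dist (γ r) (γ q) ≤ dist (γ r) (γ t) + dist (γ t) (γ q) := dist_triangle _ _ _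
    have hsymm : dist (γ t) (γ q) = dist (γ q) (γ t) := dist_comm _ _
    linarith
end

section
/- Let (X,d) be a metric space, a ≤ b reals, and γ : [a,b] → X of bounded variation that is right-continuous on [a,b). Then the partition sums V^Δ(γ) converge to V(γ) as the mesh of Δ tends to 0: for every ε > 0 there exists δ > 0 such that for every partition Δ = (a = t₀ < t₁ < ⋯ < tₙ = b) with max_i (tᵢ − tᵢ₋₁) ≤ δ one has V(γ) − ε ≤ Σ_{i=1}^n d(γ(tᵢ), γ(tᵢ₋₁)) ≤ V(γ). -/
open scoped ENNReal
private lemma chain_dist {X : Type*} [PseudoMetricSpace X] (f : ℕ → X) :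
    ∀ p q : ℕ, p ≤ q → dist (f q) (f p) ≤ ∑ j ∈ Finset.Ico p q, dist (f (j + 1)) (f j) := by
  intro p q hpq
  induction q, hpq using Nat.le_induction with
  | base => simp
  | succ q hpq ih =>
    rw [Finset.sum_Ico_succ_top hpq]
    calc dist (f (q + 1)) (f p) ≤ dist (f (q + 1)) (f q) + dist (f q) (f p) :=
          dist_triangle _ (f q) _
      _ ≤ (∑ j ∈ Finset.Ico p q, dist (f (j + 1)) (f j)) + dist (f (q + 1)) (f q) := by
          linarith
      _ = _ := rfl

private lemma subseq_sum {X : Type*} [PseudoMetricSpace X] (f : ℕ → X) (i : ℕ → ℕ)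
    (hi : Monotone i) (m : ℕ) :
    ∑ k ∈ Finset.range m, dist (f (i (k + 1))) (f (i k)) ≤
      ∑ j ∈ Finset.Ico (i 0) (i m), dist (f (j + 1)) (f j) := by
  induction m with
  | zero => simp
  | succ m ih =>
    rw [Finset.sum_range_succ,
      ← Finset.sum_Ico_consecutive _ (hi (Nat.zero_le m)) (hi (Nat.le_succ m))]
    exact add_le_add ih (chain_dist f _ _ (hi (Nat.le_succ m)))

private lemma toReal_sum_edist {X : Type*} [MetricSpace X] (γ : ℝ → X) (u : ℕ → ℝ) (n : ℕ) :
    (∑ i ∈ Finset.range n, edist (γ (u (i + 1))) (γ (u i))).toReal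
      = ∑ i ∈ Finset.range n, dist (γ (u (i + 1))) (γ (u i)) := by
  rw [ENNReal.toReal_sum (fun a _ => (edist_lt_top _ _).ne)]
  simp [dist_edist]

private lemma mono_of_strict (n : ℕ) (t : ℕ → ℝ) (hst : ∀ i < n, t i < t (i + 1)) :
    ∀ p q : ℕ, p ≤ q → q ≤ n → t p ≤ t q := by
  intro p q hpq hqn
  induction q, hpq using Nat.le_induction with
  | base => exact le_rfl
  | succ q hpq ih =>
    exact le_trans (ih (by omega)) (hst q (by omega)).le

private lemma upper_bound {X : Type*} [MetricSpace X] {a b : ℝ} (γ : ℝ → X)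
    (hγ : BoundedVariationOn γ (Set.Icc a b)) (n : ℕ) (t : ℕ → ℝ)
    (h0 : t 0 = a) (hn : t n = b)
    (hmono : ∀ p q : ℕ, p ≤ q → q ≤ n → t p ≤ t q) :
    ∑ i ∈ Finset.range n, dist (γ (t (i + 1))) (γ (t i))
      ≤ (eVariationOn γ (Set.Icc a b)).toReal := by
  set u : ℕ → ℝ := fun i => t (min i n) with hu_def
  have humono : Monotone u := fun p q hpq =>
    hmono _ _ (min_le_min_right n hpq) (min_le_right _ _)
  have hmem : ∀ i, u i ∈ Set.Icc a b := fun i =>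
    ⟨h0 ▸ hmono 0 (min i n) (Nat.zero_le _) (min_le_right _ _),
     hn ▸ hmono (min i n) n (min_le_right _ _) le_rfl⟩
  have key := eVariationOn.sum_le (f := γ) (n := n) humono hmem
  have h2 := ENNReal.toReal_mono hγ key
  rw [toReal_sum_edist γ u n] at h2
  refine le_trans (le_of_eq ?_) h2
  apply Finset.sum_congr rfl
  intro i hi
  have hi' := Finset.mem_range.mp hi
  have e1 : min (i + 1) n = i + 1 := min_eq_left (by omega)
  have e2 : min i n = i := min_eq_left (by omega)
  simp only [hu_def, e1, e2]

/-- For a right-continuous function of bounded variation on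
`[a,b]`, the partition sums converge to the variation as the mesh of the
partition tends to `0`. -/
theorem stmt7 {X : Type*} [MetricSpace X] {a b : ℝ} (hab : a ≤ b)
    (γ : ℝ → X) (hγ : BoundedVariationOn γ (Set.Icc a b))
    (hrc : ∀ t ∈ Set.Ico a b,
      Filter.Tendsto γ (nhdsWithin t (Set.Ioc t b)) (nhds (γ t))) :
    ∀ ε > (0 : ℝ), ∃ δ > (0 : ℝ), ∀ n : ℕ, ∀ t : ℕ → ℝ, 0 < n →
      t 0 = a → t n = b → (∀ i < n, t i < t (i + 1)) →
      (∀ i < n, t (i + 1) - t i ≤ δ) →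
      (eVariationOn γ (Set.Icc a b)).toReal - ε ≤
          ∑ i ∈ Finset.range n, dist (γ (t (i + 1))) (γ (t i)) ∧
        ∑ i ∈ Finset.range n, dist (γ (t (i + 1))) (γ (t i)) ≤
          (eVariationOn γ (Set.Icc a b)).toReal := by
  intro ε hε
  set V : ℝ≥0∞ := eVariationOn γ (Set.Icc a b) with hV_def
  by_cases hVε : V.toReal ≤ ε
  · refine ⟨1, one_pos, fun n t hn h0 hnb hst hmesh => ?_⟩
    have tmono := mono_of_strict n t hst
    constructor
    · have h1 : (0 : ℝ) ≤ ∑ i ∈ Finset.range n, dist (γ (t (i + 1))) (γ (t i)) :=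
        Finset.sum_nonneg fun i _ => dist_nonneg
      linarith
    · exact upper_bound γ hγ n t h0 hnb tmono
  · push_neg at hVε
    -- extract a good partition (witness) for the variation
    set r : ℝ := V.toReal - ε / 3 with hr_def
    have hr : 0 ≤ r := by rw [hr_def]; linarith
    have h1 : ENNReal.ofReal r < V := by
      have h2 : ENNReal.ofReal r < ENNReal.ofReal V.toReal := by
        rw [ENNReal.ofReal_lt_ofReal_iff (by linarith)]
        rw [hr_def]; linarith
      rwa [ENNReal.ofReal_toReal hγ] at h2
    rw [hV_def, eVariationOn, lt_iSup_iff] at h1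
    obtain ⟨⟨N, u, hu_mono, hu_mem⟩, hN⟩ := h1
    have hsum_le := eVariationOn.sum_le (f := γ) (n := N) hu_mono hu_mem
    have hreal : V.toReal - ε / 3 < ∑ i ∈ Finset.range N, dist (γ (u (i + 1))) (γ (u i)) := by
      have h2 := (ENNReal.toReal_lt_toReal ENNReal.ofReal_ne_top
        (ne_top_of_le_ne_top hγ hsum_le)).mpr hN
      rw [ENNReal.toReal_ofReal hr, toReal_sum_edist γ u N] at h2
      rw [hr_def] at h2
      exact h2
    -- the extended partition s with endpoints a, b
    set s : ℕ → ℝ := fun j => if j = 0 then a else if j ≤ N + 1 then u (j - 1) else b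
      with hs_def
    have hs0 : s 0 = a := by simp [hs_def]
    have hs_mid : ∀ j : ℕ, 1 ≤ j → j ≤ N + 1 → s j = u (j - 1) := by
      intro j h1 h2
      simp only [hs_def]
      rw [if_neg (by omega), if_pos h2]
    have hs_top : ∀ j : ℕ, N + 2 ≤ j → s j = b := by
      intro j hj
      simp only [hs_def]
      rw [if_neg (by omega), if_neg (by omega)]
    have hsm : s (N + 2) = b := hs_top _ le_rfl
    have hs_mem : ∀ j, a ≤ s j ∧ s j ≤ b := by
      intro j
      simp only [hs_def]
      split_ifs with h1 h2
      · exact ⟨le_rfl, hab⟩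
      · exact ⟨(hu_mem _).1, (hu_mem _).2⟩
      · exact ⟨hab, le_rfl⟩
    have hs_mono : Monotone s := by
      apply monotone_nat_of_le_succ
      intro j
      rcases Nat.eq_zero_or_pos j with rfl | hj
      · rw [hs0, hs_mid 1 le_rfl (by omega)]
        exact (hu_mem 0).1
      · by_cases h2 : j + 1 ≤ N + 1
        · rw [hs_mid j hj (by omega), hs_mid (j + 1) (by omega) h2]
          exact hu_mono (by omega)
        · by_cases h3 : j ≤ N + 1
          · rw [hs_mid j hj h3, hs_top (j + 1) (by omega)]
            exact (hu_mem _).2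
          · rw [hs_top j (by omega), hs_top (j + 1) (by omega)]
    -- the sum over s dominates the witness sum
    have hS_sum : V.toReal - ε / 3 <
        ∑ k ∈ Finset.range (N + 2), dist (γ (s (k + 1))) (γ (s k)) := by
      set f : ℕ → ℝ := fun k => dist (γ (s (k + 1))) (γ (s k)) with hf_def
      have e1 : ∑ k ∈ Finset.range (N + 2), f k
          = (∑ k ∈ Finset.range (N + 1), f (k + 1)) + f 0 := Finset.sum_range_succ' f (N + 1)
      have e2 : ∑ k ∈ Finset.range (N + 1), f (k + 1)
          = (∑ k ∈ Finset.range N, f (k + 1)) + f (N + 1) :=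
        Finset.sum_range_succ (fun k => f (k + 1)) N
      have e3 : ∑ k ∈ Finset.range N, f (k + 1)
          = ∑ k ∈ Finset.range N, dist (γ (u (k + 1))) (γ (u k)) := by
        apply Finset.sum_congr rfl
        intro k hk
        have hk' := Finset.mem_range.mp hk
        have q1 : s (k + 1 + 1) = u (k + 1) := by
          rw [hs_mid (k + 2) (by omega) (by omega)]
          congr 1
        have q2 : s (k + 1) = u k := by
          rw [hs_mid (k + 1) (by omega) (by omega)]
          congr 1
        simp only [hf_def, q1, q2]
      have h4 : 0 ≤ f 0 := dist_nonneg
      have h5 : 0 ≤ f (N + 1) := dist_nonneg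
      calc V.toReal - ε / 3 < ∑ k ∈ Finset.range N, dist (γ (u (k + 1))) (γ (u k)) := hreal
        _ ≤ ∑ k ∈ Finset.range (N + 2), f k := by rw [e1, e2, e3]; linarith
    -- right-continuity moduli
    set c : ℝ := ε / (6 * (N + 3)) with hc_def
    have hc : 0 < c := by
      apply div_pos hε
      positivity
    have hη_ex : ∀ j : ℕ, ∃ η > (0 : ℝ), ∀ x ∈ Set.Ioc (s j) b,
        dist x (s j) < η → dist (γ x) (γ (s j)) < c := by
      intro j
      by_cases hj : s j < b
      · have hmem : s j ∈ Set.Ico a b := ⟨(hs_mem j).1, hj⟩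
        have h6 := hrc (s j) hmem
        rw [Metric.tendsto_nhdsWithin_nhds] at h6
        obtain ⟨η, hηpos, hη⟩ := h6 c hc
        exact ⟨η, hηpos, fun x hx hd => hη hx hd⟩
      · exact ⟨1, one_pos, fun x hx _ => absurd (lt_of_lt_of_le hx.1 hx.2) hj⟩
    choose η hηpos hη using hη_ex
    set δ : ℝ := (Finset.range (N + 3)).inf' (Finset.nonempty_range_iff.mpr (by omega)) η with hδ_def
    have hδpos : 0 < δ := by
      rw [hδ_def, Finset.lt_inf'_iff]
      exact fun j _ => hηpos j
    have hδle : ∀ j : ℕ, j ≤ N + 2 → δ ≤ η j := fun j hj =>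
      Finset.inf'_le _ (Finset.mem_range.mpr (by omega))
    refine ⟨δ, hδpos, fun n t hn h0 hnb hst hmesh => ?_⟩
    have tmono := mono_of_strict n t hst
    refine ⟨?_, upper_bound γ hγ n t h0 hnb tmono⟩
    -- lower bound: map each s j to the first fine-partition point ≥ s j
    set ii : ℕ → ℕ := fun j => sInf {k | s j ≤ t k} with hii_def
    have hspec : ∀ j, s j ≤ t (ii j) := fun j =>
      Nat.sInf_mem (⟨n, by rw [Set.mem_setOf_eq, hnb]; exact (hs_mem j).2⟩ :
        Set.Nonempty {k | s j ≤ t k})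
    have hii_le : ∀ j, ii j ≤ n := fun j =>
      Nat.sInf_le (by rw [Set.mem_setOf_eq, hnb]; exact (hs_mem j).2)
    have hii_mono : Monotone ii := fun j j' h =>
      Nat.sInf_le (by rw [Set.mem_setOf_eq]; exact le_trans (hs_mono h) (hspec j'))
    have hii0 : ii 0 = 0 :=
      Nat.eq_zero_of_le_zero (Nat.sInf_le (by rw [Set.mem_setOf_eq, hs0, h0]))
    have hiim : ii (N + 2) = n := by
      refine le_antisymm (hii_le _) ?_
      by_contra hcon
      push_neg at hcon
      have h7 : t (ii (N + 2)) < t n :=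
        lt_of_lt_of_le (hst _ hcon) (tmono _ _ (by omega) le_rfl)
      have h8 := hspec (N + 2)
      rw [hsm] at h8
      rw [hnb] at h7
      linarith
    -- each mapped point is close in γ-distance
    have hclose : ∀ j : ℕ, j ≤ N + 2 → dist (γ (t (ii j))) (γ (s j)) ≤ c := by
      intro j hj
      rcases eq_or_lt_of_le (hspec j) with heq | hlt
      · rw [← heq]
        simp [hc.le]
      · have hb : t (ii j) ≤ b := hnb ▸ tmono (ii j) n (hii_le j) le_rfl
        have hii_pos : ii j ≠ 0 := by
          intro h0'
          rw [h0', h0] at hlt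
          exact absurd (hspec j) (by rw [h0', h0]; linarith [(hs_mem j).1])
        obtain ⟨k, hk⟩ : ∃ k, ii j = k + 1 := ⟨ii j - 1, by omega⟩
        have hiieq : ii j = sInf {k' | s j ≤ t k'} := rfl
        have hknotmem : k ∉ {k' | s j ≤ t k'} :=
          Nat.notMem_of_lt_sInf (by omega)
        have htk : t k < s j := lt_of_not_ge hknotmem
        have hkn : k < n := by have := hii_le j; omega
        have hmesh' := hmesh k hkn
        have hdist : dist (t (ii j)) (s j) < η j := by
          rw [Real.dist_eq, abs_of_nonneg (by linarith [hspec j])]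
          have h9 : t (ii j) ≤ t k + δ := by rw [hk]; linarith
          have h10 := hδle j hj
          linarith
        exact (hη j (t (ii j)) ⟨hlt, hb⟩ hdist).le
    -- assemble the chain of inequalities
    have step1 : ∑ k ∈ Finset.range (N + 2), dist (γ (t (ii (k + 1)))) (γ (t (ii k)))
        ≤ ∑ i ∈ Finset.range n, dist (γ (t (i + 1))) (γ (t i)) := by
      have h11 := subseq_sum (fun k => γ (t k)) ii hii_mono (N + 2)
      rw [hii0, hiim, ← Finset.range_eq_Ico] at h11
      exact h11
    have step2 : ∑ k ∈ Finset.range (N + 2), dist (γ (s (k + 1))) (γ (s k))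
        ≤ (∑ k ∈ Finset.range (N + 2), dist (γ (t (ii (k + 1)))) (γ (t (ii k))))
          + (N + 2 : ℝ) * (2 * c) := by
      have h12 : ∀ k ∈ Finset.range (N + 2), dist (γ (s (k + 1))) (γ (s k))
          ≤ dist (γ (t (ii (k + 1)))) (γ (t (ii k))) + 2 * c := by
        intro k hk
        have hk' := Finset.mem_range.mp hk
        have q1 := hclose (k + 1) (by omega)
        have q2 := hclose k (by omega)
        have tri := dist_triangle4 (γ (s (k + 1))) (γ (t (ii (k + 1)))) (γ (t (ii k))) (γ (s k))
        have c1 : dist (γ (s (k + 1))) (γ (t (ii (k + 1))))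
            = dist (γ (t (ii (k + 1)))) (γ (s (k + 1))) := dist_comm _ _
        have c2 : dist (γ (t (ii k))) (γ (s k)) = dist (γ (t (ii k))) (γ (s k)) := rfl
        linarith [tri, q1, q2, c1]
      calc ∑ k ∈ Finset.range (N + 2), dist (γ (s (k + 1))) (γ (s k))
          ≤ ∑ k ∈ Finset.range (N + 2),
              (dist (γ (t (ii (k + 1)))) (γ (t (ii k))) + 2 * c) :=
            Finset.sum_le_sum h12
        _ = (∑ k ∈ Finset.range (N + 2), dist (γ (t (ii (k + 1)))) (γ (t (ii k))))
            + (N + 2 : ℝ) * (2 * c) := by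
            rw [Finset.sum_add_distrib, Finset.sum_const, Finset.card_range]
            push_cast
            ring
    have hcsum : (N + 2 : ℝ) * (2 * c) ≤ ε / 3 := by
      rw [hc_def, show ((N : ℝ) + 2) * (2 * (ε / (6 * ((N : ℝ) + 3))))
          = (((N : ℝ) + 2) * 2 * ε) / (6 * ((N : ℝ) + 3)) by ring,
        div_le_div_iff₀ (by positivity) (by norm_num : (0:ℝ) < 3)]
      nlinarith [hε, (Nat.cast_nonneg N : (0:ℝ) ≤ N)]
    linarith [hS_sum, step1, step2, hcsum]
end

section
/- Let (X,d) be a metric space, a ≤ b reals, and γ : [a,b] → X of bounded variation that is right-continuous on [a,b) and such that for every t ∈ (a,b] there exists a point γ(t⁻) ∈ X with γ(s) → γ(t⁻) as s → t from the left within [a,t). Then the closure of γ([a,b]) equals γ([a,b]) ∪ { γ(t⁻) : t ∈ (a,b] }, and this closure is a compact subset of X. -/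
/-! By compactness of `[a,b]`, any sequence `tₙ` in `[a,b]` has a subsequence converging to
some `l` that is constant, strictly below `l`, or strictly above `l`. Along it, `γ(tₙ)` tends to
`γ l`, `γ(l⁻)` or (by right-continuity) `γ l`. So every sequence in `γ([a,b])` has a subsequence
converging in `γ([a,b]) ∪ {γ(t⁻)}`; this identifies the closure, and approximating points of the
closure by points of `γ([a,b])` gives its sequential compactness. -/

open Filter Set Topology

theorem exists_strictMono_subseq_eq_or_lt_or_gt {α : Type*} [LinearOrder α] (t : ℕ → α) (l : α) :
    ∃ φ : ℕ → ℕ, StrictMono φ ∧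
      ((∀ n, t (φ n) = l) ∨ (∀ n, t (φ n) < l) ∨ (∀ n, l < t (φ n))) := by
  by_cases heq : ∃ᶠ n in atTop, t n = l
  · obtain ⟨φ, hφ, h⟩ := extraction_of_frequently_atTop heq
    exact ⟨φ, hφ, Or.inl h⟩
  by_cases hlt : ∃ᶠ n in atTop, t n < l
  · obtain ⟨φ, hφ, h⟩ := extraction_of_frequently_atTop hlt
    exact ⟨φ, hφ, Or.inr (Or.inl h)⟩
  have hgt : ∀ᶠ n in atTop, l < t n := by
    filter_upwards [not_frequently.mp heq, not_frequently.mp hlt] with n hne hnlt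
    exact lt_of_le_of_ne (not_lt.mp hnlt) (Ne.symm hne)
  obtain ⟨φ, hφ, h⟩ := extraction_of_frequently_atTop hgt.frequently
  exact ⟨φ, hφ, Or.inr (Or.inr h)⟩

theorem isSeqCompact_closure_of_forall_exists_subseq_tendsto {X : Type*} [PseudoMetricSpace X]
    {A : Set X}
    (h : ∀ u : ℕ → X, (∀ n, u n ∈ A) →
      ∃ x ∈ closure A, ∃ φ : ℕ → ℕ, StrictMono φ ∧ Tendsto (u ∘ φ) atTop (𝓝 x)) :
    IsSeqCompact (closure A) := by
  intro u hu
  choose v hvA hv using fun n : ℕ => Metric.mem_closure_iff.mp (hu n) _ Nat.one_div_pos_of_nat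
  obtain ⟨x, hx, φ, hφ, hvx⟩ := h v hvA
  have hdist : Tendsto (fun n => dist (v n) (u n)) atTop (𝓝 0) :=
    squeeze_zero (fun _ => dist_nonneg) (fun n => (dist_comm (v n) (u n)).trans_le (hv n).le)
      tendsto_one_div_add_atTop_nhds_zero_nat
  exact ⟨x, hx, φ, hφ, hvx.congr_dist (hdist.comp hφ.tendsto_atTop)⟩

section OneSidedLimits

variable {X : Type*} [TopologicalSpace X] {a b : ℝ} {γ γm : ℝ → X}

theorem leftLim_mem_closure_image
    (hlim : ∀ t ∈ Ioc a b, Tendsto γ (𝓝[Ico a t] t) (𝓝 (γm t))) {s : ℝ} (hs : s ∈ Ioc a b) :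
    γm s ∈ closure (γ '' Icc a b) := by
  have : (𝓝[Ico a s] s).NeBot :=
    mem_closure_iff_nhdsWithin_neBot.mp (by simpa [closure_Ico hs.1.ne] using hs.1.le)
  refine mem_closure_of_tendsto (hlim s hs) (eventually_nhdsWithin_of_forall fun y hy => ?_)
  exact mem_image_of_mem γ ⟨hy.1, hy.2.le.trans hs.2⟩

theorem exists_subseq_tendsto_mem_image_union_leftLim
    (hrc : ∀ t ∈ Ico a b, Tendsto γ (𝓝[Ioc t b] t) (𝓝 (γ t)))
    (hlim : ∀ t ∈ Ioc a b, Tendsto γ (𝓝[Ico a t] t) (𝓝 (γm t)))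
    {u : ℕ → X} (hu : ∀ n, u n ∈ γ '' Icc a b) :
    ∃ x ∈ γ '' Icc a b ∪ γm '' Ioc a b, ∃ φ : ℕ → ℕ, StrictMono φ ∧
      Tendsto (u ∘ φ) atTop (𝓝 x) := by
  choose t ht hγt using hu
  obtain rfl : γ ∘ t = u := funext hγt
  obtain ⟨l, hl, ψ, hψ, htl⟩ := isCompact_Icc.tendsto_subseq ht
  obtain ⟨φ, hφ, hside⟩ := exists_strictMono_subseq_eq_or_lt_or_gt (t ∘ ψ) l
  have hsub : Tendsto (t ∘ ψ ∘ φ) atTop (𝓝 l) := htl.comp hφ.tendsto_atTop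
  rcases hside with heq | hlt | hgt
  · refine ⟨γ l, Or.inl (mem_image_of_mem γ hl), ψ ∘ φ, hψ.comp hφ, ?_⟩
    exact tendsto_const_nhds.congr fun n => congrArg γ (heq n).symm
  · have hl' : l ∈ Ioc a b := ⟨(ht _).1.trans_lt (hlt 0), hl.2⟩
    refine ⟨γm l, Or.inr (mem_image_of_mem γm hl'), ψ ∘ φ, hψ.comp hφ, ?_⟩
    exact (hlim l hl').comp <| tendsto_nhdsWithin_of_tendsto_nhds_of_eventually_within _ hsub
      (Eventually.of_forall fun n => ⟨(ht _).1, hlt n⟩)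
  · have hl' : l ∈ Ico a b := ⟨hl.1, (hgt 0).trans_le (ht _).2⟩
    refine ⟨γ l, Or.inl (mem_image_of_mem γ hl), ψ ∘ φ, hψ.comp hφ, ?_⟩
    exact (hrc l hl').comp <| tendsto_nhdsWithin_of_tendsto_nhds_of_eventually_within _ hsub
      (Eventually.of_forall fun n => ⟨hgt n, (ht _).2⟩)

theorem closure_image_subset_image_union_leftLim [T2Space X] [FrechetUrysohnSpace X]
    (hrc : ∀ t ∈ Ico a b, Tendsto γ (𝓝[Ioc t b] t) (𝓝 (γ t)))
    (hlim : ∀ t ∈ Ioc a b, Tendsto γ (𝓝[Ico a t] t) (𝓝 (γm t))) :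
    closure (γ '' Icc a b) ⊆ γ '' Icc a b ∪ γm '' Ioc a b := by
  intro x hx
  obtain ⟨u, hu, hux⟩ := mem_closure_iff_seq_limit.mp hx
  obtain ⟨y, hy, φ, hφ, huy⟩ := exists_subseq_tendsto_mem_image_union_leftLim hrc hlim hu
  rwa [tendsto_nhds_unique (hux.comp hφ.tendsto_atTop) huy]

end OneSidedLimits

theorem stmt10_general {X : Type*} [MetricSpace X] {a b : ℝ}
    (γ : ℝ → X)
    (hrc : ∀ t ∈ Set.Ico a b,
      Filter.Tendsto γ (nhdsWithin t (Set.Ioc t b)) (nhds (γ t)))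
    (γm : ℝ → X)
    (hlim : ∀ t ∈ Set.Ioc a b,
      Filter.Tendsto γ (nhdsWithin t (Set.Ico a t)) (nhds (γm t))) :
    closure (γ '' Set.Icc a b) = γ '' Set.Icc a b ∪ γm '' Set.Ioc a b ∧
      IsCompact (closure (γ '' Set.Icc a b)) := by
  have hsup : γ '' Icc a b ∪ γm '' Ioc a b ⊆ closure (γ '' Icc a b) :=
    union_subset subset_closure (image_subset_iff.2 fun _ hs => leftLim_mem_closure_image hlim hs)
  refine ⟨(closure_image_subset_image_union_leftLim hrc hlim).antisymm hsup, ?_⟩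
  refine (isSeqCompact_closure_of_forall_exists_subseq_tendsto fun u hu => ?_).isCompact
  obtain ⟨x, hx, hsubseq⟩ := exists_subseq_tendsto_mem_image_union_leftLim hrc hlim hu
  exact ⟨x, hsup hx, hsubseq⟩

/-- For a right-continuous function of bounded variation on
`[a,b]` whose left limits `γ(t⁻)` exist at every `t ∈ (a,b]`, the closure of
the image equals the image together with the left limits, and this closure is
compact. -/
theorem stmt10 {X : Type*} [MetricSpace X] {a b : ℝ} (hab : a ≤ b)
    (γ : ℝ → X) (hγ : BoundedVariationOn γ (Set.Icc a b))
    (hrc : ∀ t ∈ Set.Ico a b,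
      Filter.Tendsto γ (nhdsWithin t (Set.Ioc t b)) (nhds (γ t)))
    (γm : ℝ → X)
    (hlim : ∀ t ∈ Set.Ioc a b,
      Filter.Tendsto γ (nhdsWithin t (Set.Ico a t)) (nhds (γm t))) :
    closure (γ '' Set.Icc a b) = γ '' Set.Icc a b ∪ γm '' Set.Ioc a b ∧
      IsCompact (closure (γ '' Set.Icc a b)) :=
  stmt10_general γ hrc γm hlim
end

section
/- Let (X,d) be a metric space, a ≤ b reals, and γ : [a,b] → X a test curve, i.e. γ has bounded variation, is right-continuous on [a,b), is left-continuous at b, and the left limit of γ exists at every t ∈ (a,b). Let γ' : [a,b] → X (the reversal of γ) satisfy γ'(b) = γ(a) and, for every t ∈ [a,b), γ(s) → γ'(t) as s → (a+b−t) from the left within [a, a+b−t). Then V(γ') = V(γ). -/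
open Filter Set Topology
open scoped ENNReal NNReal

private lemma revpick {X : Type*} [MetricSpace X] {a b : ℝ} (f g : ℝ → X) {δ : ℝ≥0∞}
    (hδ : 0 < δ) {t : ℝ} (ht : t ∈ Set.Ico a b)
    (h : Filter.Tendsto g (nhdsWithin (a + b - t) (Set.Ico a (a + b - t))) (nhds (f t)))
    {p : ℝ} (hpa : a ≤ p) (hpτ : p < a + b - t) :
    ∃ x, p ≤ x ∧ a ≤ x ∧ x < a + b - t ∧ edist (f t) (g x) ≤ δ := by
  obtain ⟨hta, htb⟩ := ht
  have hτ : a < a + b - t := by linarith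
  have hne : (nhdsWithin (a + b - t) (Set.Ico a (a + b - t))).NeBot := by
    rw [nhdsWithin_Ico_eq_nhdsLT hτ]; exact inferInstance
  have h1 : ∀ᶠ x in nhdsWithin (a + b - t) (Set.Ico a (a + b - t)), edist (g x) (f t) < δ :=
    EMetric.tendsto_nhds.1 h δ hδ
  have h2 : ∀ᶠ x in nhdsWithin (a + b - t) (Set.Ico a (a + b - t)), p < x := by
    filter_upwards [mem_nhdsWithin_of_mem_nhds (Ioi_mem_nhds hpτ)] with x hx using hx
  obtain ⟨x, hx1, hx2, hx3⟩ := (h1.and (h2.and eventually_mem_nhdsWithin)).exists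
  exact ⟨x, hx2.le, hx3.1, hx3.2, by rw [edist_comm]; exact hx1.le⟩

private def RevP {X : Type*} [MetricSpace X] (a b : ℝ) (f g : ℝ → X) (δ : ℝ≥0∞)
    (t x : ℝ) : Prop :=
  a ≤ x ∧ x ≤ a + b - t ∧ (t < b → x < a + b - t) ∧ edist (f t) (g x) ≤ δ

private lemma revkey {X : Type*} [MetricSpace X] {a b : ℝ} (hab : a < b)
    (f g : ℝ → X) (h0 : f b = g a)
    (h : ∀ t ∈ Set.Ico a b,
      Filter.Tendsto g (nhdsWithin (a + b - t) (Set.Ico a (a + b - t))) (nhds (f t))) :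
    eVariationOn f (Set.Icc a b) ≤ eVariationOn g (Set.Icc a b) := by
  refine iSup_le ?_
  rintro ⟨n, u, hu, us⟩
  dsimp only
  apply ENNReal.le_of_forall_pos_le_add
  intro ε hε _
  set δ : ℝ≥0∞ := (ε : ℝ≥0∞) / (2 * n + 1) with hδdef
  have hδpos : 0 < δ := ENNReal.div_pos (by exact_mod_cast hε.ne') (by finiteness)
  -- construct approximation points
  have exists_v : ∃ v : ℕ → ℝ, Monotone v ∧ (∀ j, v j ∈ Set.Icc a b) ∧
      (∀ j, edist (f (u (n - j))) (g (v j)) ≤ δ) := by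
    have base : ∃ x, RevP a b f g δ (u (n - 0)) x := by
      rcases eq_or_lt_of_le (us (n - 0)).2 with he | hlt
      · refine ⟨a, le_refl a, by rw [he]; linarith, fun hc => absurd he hc.ne, ?_⟩
        rw [he, h0, edist_self]; exact zero_le
      · obtain ⟨x, hpx, hax, hxτ, hed⟩ := revpick f g hδpos ⟨(us (n - 0)).1, hlt⟩
          (h _ ⟨(us (n - 0)).1, hlt⟩) (le_refl a) (by linarith [(us (n - 0)).1])
        exact ⟨x, hax, hxτ.le, fun _ => hxτ, hed⟩
    have step : ∀ j x, RevP a b f g δ (u (n - j)) x →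
        ∃ y, x ≤ y ∧ RevP a b f g δ (u (n - (j + 1))) y := by
      intro j x hx
      have hle : u (n - (j + 1)) ≤ u (n - j) := hu (Nat.sub_le_sub_left (Nat.le_succ j) n)
      rcases eq_or_lt_of_le hle with he | hlt
      · exact ⟨x, le_refl x, by rw [he]; exact hx⟩
      · have ht'b : u (n - (j + 1)) < b := lt_of_lt_of_le hlt (us (n - j)).2
        obtain ⟨y, hxy, hay, hyτ, hed⟩ := revpick f g hδpos ⟨(us (n - (j + 1))).1, ht'b⟩
          (h _ ⟨(us (n - (j + 1))).1, ht'b⟩) hx.1 (by linarith [hx.2.1])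
        exact ⟨y, hxy, hay, hyτ.le, fun _ => hyτ, hed⟩
    choose! F hF using step
    obtain ⟨x0, hx0⟩ := base
    set v : ℕ → ℝ := fun j => Nat.rec x0 F j with hv
    have hPv : ∀ j, RevP a b f g δ (u (n - j)) (v j) := by
      intro j
      induction j with
      | zero => exact hx0
      | succ j ih => exact (hF j (v j) ih).2
    have hmono : Monotone v := monotone_nat_of_le_succ fun j => (hF j (v j) (hPv j)).1
    refine ⟨v, hmono, fun j => ⟨(hPv j).1, ?_⟩, fun j => (hPv j).2.2.2⟩
    have := (hPv j).2.1
    have := (us (n - j)).1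
    linarith
  obtain ⟨v, hvmono, hvmem, hvedist⟩ := exists_v
  have hsum : ∀ i ∈ Finset.range n, edist (f (u (i + 1))) (f (u i)) ≤
      δ + (edist (g (v (n - 1 - i + 1))) (g (v (n - 1 - i))) + δ) := by
    intro i hi
    rw [Finset.mem_range] at hi
    have e1 : n - (n - (i + 1)) = i + 1 := Nat.sub_sub_self hi
    have e2 : n - (n - i) = i := Nat.sub_sub_self hi.le
    have k1 : n - 1 - i + 1 = n - i := by omega
    have k2 : n - 1 - i = n - (i + 1) := by omega
    calc edist (f (u (i + 1))) (f (u i))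
        ≤ edist (f (u (i + 1))) (g (v (n - (i + 1)))) +
            edist (g (v (n - (i + 1)))) (g (v (n - i))) +
            edist (g (v (n - i))) (f (u i)) := edist_triangle4 _ _ _ _
      _ ≤ δ + edist (g (v (n - (i + 1)))) (g (v (n - i))) + δ := by
          gcongr
          · have := hvedist (n - (i + 1)); rwa [e1] at this
          · have := hvedist (n - i); rw [e2] at this; rwa [edist_comm]
      _ = δ + (edist (g (v (n - 1 - i + 1))) (g (v (n - 1 - i))) + δ) := by
          rw [k1, k2, edist_comm (g (v (n - (i + 1)))) (g (v (n - i)))]; ring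
  calc (∑ i ∈ Finset.range n, edist (f (u (i + 1))) (f (u i)))
      ≤ ∑ i ∈ Finset.range n,
          (δ + (edist (g (v (n - 1 - i + 1))) (g (v (n - 1 - i))) + δ)) :=
        Finset.sum_le_sum hsum
    _ = (∑ i ∈ Finset.range n, edist (g (v (n - 1 - i + 1))) (g (v (n - 1 - i)))) +
          ((n : ℝ≥0∞) * δ + n * δ) := by
        rw [Finset.sum_add_distrib, Finset.sum_add_distrib, Finset.sum_const,
          Finset.card_range, nsmul_eq_mul]
        ring
    _ = (∑ k ∈ Finset.range n, edist (g (v (k + 1))) (g (v k))) +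
          ((n : ℝ≥0∞) * δ + n * δ) := by
        rw [Finset.sum_range_reflect (fun k => edist (g (v (k + 1))) (g (v k))) n]
    _ ≤ eVariationOn g (Set.Icc a b) + ((n : ℝ≥0∞) * δ + n * δ) :=
        add_le_add_left (eVariationOn.sum_le (f := g) (n := n) hvmono hvmem) _
    _ ≤ eVariationOn g (Set.Icc a b) + ε := by
        gcongr
        have h1 : (n : ℝ≥0∞) * δ + n * δ ≤ (2 * n + 1) * δ := by
          have he : (n : ℝ≥0∞) * δ + n * δ = (2 * n) * δ := by ring
          rw [he]
          exact mul_le_mul_left le_self_add δ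
        have h2 : (2 * (n : ℝ≥0∞) + 1) * δ = ε :=
          ENNReal.mul_div_cancel (lt_of_lt_of_le one_pos le_add_self).ne' (by finiteness)
        exact h1.trans h2.le

/-- The reversal `γ'(t) = γ((a+b−t)⁻)` (with `γ'(b) = γ(a)`) of a
test curve `γ` on `[a,b]` has the same variation as `γ`. A test curve is a
function of bounded variation which is right-continuous on `[a,b)`,
left-continuous at `b`, and has left limits at every point of `(a,b)`. -/
theorem stmt11 {X : Type*} [MetricSpace X] {a b : ℝ} (hab : a ≤ b)
    (γ : ℝ → X) (hγ : BoundedVariationOn γ (Set.Icc a b))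
    (hrc : ∀ t ∈ Set.Ico a b,
      Filter.Tendsto γ (nhdsWithin t (Set.Ioc t b)) (nhds (γ t)))
    (hlcb : Filter.Tendsto γ (nhdsWithin b (Set.Ico a b)) (nhds (γ b)))
    (hll : ∀ t ∈ Set.Ioo a b, ∃ x : X,
      Filter.Tendsto γ (nhdsWithin t (Set.Ico a t)) (nhds x))
    (γ' : ℝ → X) (hb : γ' b = γ a)
    (hrev : ∀ t ∈ Set.Ico a b,
      Filter.Tendsto γ (nhdsWithin (a + b - t) (Set.Ico a (a + b - t)))
        (nhds (γ' t))) :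
    eVariationOn γ' (Set.Icc a b) = eVariationOn γ (Set.Icc a b) := by
  rcases eq_or_lt_of_le hab with rfl | hab'
  · have hs : (Set.Icc a a).Subsingleton := by
      rw [Set.Icc_self]; exact Set.subsingleton_singleton
    rw [eVariationOn.subsingleton γ' hs, eVariationOn.subsingleton γ hs]
  · have hga : γ' a = γ b := by
      have h1 := hrev a ⟨le_refl a, hab'⟩
      rw [show a + b - a = b by ring] at h1
      have : (nhdsWithin b (Set.Ico a b)).NeBot := by
        rw [nhdsWithin_Ico_eq_nhdsLT hab']; exact inferInstance
      exact tendsto_nhds_unique h1 hlcb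
    have hrev' : ∀ t ∈ Set.Ico a b,
        Filter.Tendsto γ' (nhdsWithin (a + b - t) (Set.Ico a (a + b - t))) (nhds (γ t)) := by
      rintro t ⟨hat, htb⟩
      have hτ : a < a + b - t := by linarith
      rw [EMetric.tendsto_nhds]
      intro ε hε
      obtain ⟨ε', hε'0, hε'ε⟩ := exists_between hε
      have h1 : ∀ᶠ s in nhdsWithin t (Set.Ioc t b), edist (γ s) (γ t) < ε' :=
        EMetric.tendsto_nhds.1 (hrc t ⟨hat, htb⟩) ε' hε'0
      rw [nhdsWithin_Ioc_eq_nhdsGT htb] at h1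
      rw [Filter.Eventually, mem_nhdsGT_iff_exists_Ioc_subset] at h1
      obtain ⟨c, htc, hc⟩ := h1
      rw [Set.mem_Ioi] at htc
      have h2 : ∀ᶠ r in nhdsWithin (a + b - t) (Set.Ico a (a + b - t)),
          a + b - min c b < r := by
        filter_upwards [mem_nhdsWithin_of_mem_nhds
          (Ioi_mem_nhds (show a + b - min c b < a + b - t by
            have := lt_min htc htb; linarith))] with r hr using hr
      filter_upwards [h2, eventually_mem_nhdsWithin] with r hrc' hrmem
      have hra : a ≤ r := hrmem.1
      have hrτ : r < a + b - t := hrmem.2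
      have hrb : r < b := by linarith
      have hσt : t < a + b - r := by linarith
      have hσc : a + b - r ≤ min c b := by linarith
      have h3 := hrev r ⟨hra, hrb⟩
      have hne : (nhdsWithin (a + b - r) (Set.Ico a (a + b - r))).NeBot := by
        rw [nhdsWithin_Ico_eq_nhdsLT (show a < a + b - r by linarith)]
        exact inferInstance
      have h4 : Filter.Tendsto (fun s => edist (γ s) (γ t))
          (nhdsWithin (a + b - r) (Set.Ico a (a + b - r)))
          (nhds (edist (γ' r) (γ t))) := h3.edist tendsto_const_nhds
      have h5 : ∀ᶠ s in nhdsWithin (a + b - r) (Set.Ico a (a + b - r)),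
          edist (γ s) (γ t) ≤ ε' := by
        filter_upwards [mem_nhdsWithin_of_mem_nhds (Ioi_mem_nhds hσt),
          eventually_mem_nhdsWithin] with s hs1 hs2
        exact le_of_lt (hc ⟨hs1, le_trans hs2.2.le (hσc.trans (min_le_left _ _))⟩)
      calc edist (γ' r) (γ t) ≤ ε' := le_of_tendsto h4 h5
        _ < ε := hε'ε
    exact le_antisymm (revkey hab' γ' γ hb hrev) (revkey hab' γ γ' hga.symm hrev')
end

section
/- Let (X,d) be a metric space, a ≤ b reals, and γ : [a,b] → X of bounded variation, right-continuous on [a,b) and left-continuous at b. If γ' : [a,b] → X is any function with γ' = γ Lebesgue-almost everywhere on [a,b], then V(γ) ≤ V(γ'). Consequently the essential variation of the almost-everywhere class of γ, i.e. the infimum of V(γ') over all γ' equal to γ almost everywhere, equals V(γ). -/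
open MeasureTheory Set Filter
open scoped ENNReal NNReal

lemma stmt14_dense {X : Type*} [MetricSpace X] {a b : ℝ} {γ' γ : ℝ → X}
    (hae : ∀ᵐ t ∂(volume.restrict (Icc a b)), γ' t = γ t)
    {c d : ℝ} (hcd : c < d) (hsub : Ioc c d ⊆ Icc a b) :
    ∃ s ∈ Ioc c d, γ' s = γ s := by
  by_contra h
  push_neg at h
  rw [MeasureTheory.ae_iff] at hae
  rw [Measure.restrict_apply' measurableSet_Icc] at hae
  have hsub2 : Ioc c d ⊆ {t | ¬ γ' t = γ t} ∩ Icc a b :=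
    fun t ht => ⟨h t ht, hsub ht⟩
  have h0 : volume (Ioc c d) = 0 := measure_mono_null hsub2 hae
  rw [Real.volume_Ioc] at h0
  simp only [ENNReal.ofReal_eq_zero] at h0
  linarith

lemma stmt14_core {X : Type*} [MetricSpace X] {a b : ℝ}
    (γ : ℝ → X)
    (hrc : ∀ t ∈ Set.Ico a b,
      Filter.Tendsto γ (nhdsWithin t (Set.Ioc t b)) (nhds (γ t)))
    (hlcb : Filter.Tendsto γ (nhdsWithin b (Set.Ico a b)) (nhds (γ b)))
    (γ' : ℝ → X)
    (hae : ∀ᵐ t ∂(MeasureTheory.volume.restrict (Set.Icc a b)), γ' t = γ t)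
    (hlt : a < b) (n : ℕ) (u : ℕ → ℝ) (hu : Monotone u) (hus : ∀ i, u i ∈ Set.Icc a b)
    (ε₀ : ℝ≥0∞) (hε₀pos : 0 < ε₀) :
    ∑ i ∈ Finset.range n, edist (γ (u (i + 1))) (γ (u i)) ≤
      eVariationOn γ' (Set.Icc a b) + (n : ℝ≥0∞) * (ε₀ + ε₀) := by
  -- clamped partition
  set w : ℕ → ℝ := fun i => u (min i n) with hw
  have hwmono : Monotone w := fun i j hij => hu (min_le_min_right n hij)
  have hwmem : ∀ i, w i ∈ Set.Icc a b := fun i => hus _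
  have hwagree : ∀ i ≤ n, w i = u i := fun i hi => by simp [hw, min_eq_left hi]
  -- minimal gap δ
  have hne : (Finset.range (n+1)).Nonempty := ⟨0, by simp⟩
  set δ₁ : ℝ := ((Finset.range (n+1)) ×ˢ (Finset.range (n+1))).inf' (hne.product hne)
      (fun p => if u p.1 < u p.2 then u p.2 - u p.1 else 1) with hδ₁
  set δ₂ : ℝ := (Finset.range (n+1)).inf' hne (fun i => if u i < b then b - u i else 1) with hδ₂
  set δ : ℝ := min δ₁ δ₂ with hδdef
  have hδpos : 0 < δ := by
    apply lt_min
    · rw [hδ₁, Finset.lt_inf'_iff]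
      rintro ⟨i, j⟩ _
      dsimp only
      split
      · linarith [sub_pos.2 ‹u i < u j›]
      · norm_num
    · rw [hδ₂, Finset.lt_inf'_iff]
      intro i _
      split
      · linarith [sub_pos.2 ‹u i < b›]
      · norm_num
  have hδ1 : ∀ i j, w i < w j → δ ≤ w j - w i := by
    intro i j hij
    have hmem : (⟨min i n, min j n⟩ : ℕ × ℕ) ∈ (Finset.range (n+1)) ×ˢ (Finset.range (n+1)) :=
      Finset.mem_product.2 ⟨Finset.mem_range.2 (Nat.lt_succ_of_le (min_le_right _ _)),
        Finset.mem_range.2 (Nat.lt_succ_of_le (min_le_right _ _))⟩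
    have := Finset.inf'_le (fun p : ℕ × ℕ => if u p.1 < u p.2 then u p.2 - u p.1 else 1) hmem
    rw [if_pos hij] at this
    exact le_trans (min_le_left _ _) this
  have hδ2 : ∀ i, w i < b → δ ≤ b - w i := by
    intro i hib
    have hmem : min i n ∈ Finset.range (n+1) :=
      Finset.mem_range.2 (Nat.lt_succ_of_le (min_le_right _ _))
    have := Finset.inf'_le (fun i => if u i < b then b - u i else 1) hmem
    rw [if_pos hib] at this
    exact le_trans (min_le_right _ _) this
  -- right-density selection
  have key1 : ∀ t ∈ Set.Ico a b, ∃ s, t < s ∧ s ≤ t + δ/2 ∧ s ≤ b ∧ γ' s = γ s ∧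
      edist (γ s) (γ t) ≤ ε₀ := by
    intro t ht
    have hev : ∀ᶠ s in nhdsWithin t (Set.Ioc t b), edist (γ s) (γ t) < ε₀ :=
      (EMetric.tendsto_nhds.1 (hrc t ht)) ε₀ hε₀pos
    rw [eventually_nhdsWithin_iff, Metric.eventually_nhds_iff] at hev
    obtain ⟨η, hη, hball⟩ := hev
    have htd : t < min (t + min (η/2) (δ/2)) b := by
      apply lt_min _ ht.2
      have : 0 < min (η/2) (δ/2) := lt_min (by linarith) (by linarith)
      linarith
    obtain ⟨s, hs, hseq⟩ := stmt14_dense hae htd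
      (fun x hx => ⟨le_trans ht.1 hx.1.le, le_trans hx.2 (min_le_right _ _)⟩)
    have hs2 : s ≤ t + min (η/2) (δ/2) := le_trans hs.2 (min_le_left _ _)
    have hsb : s ≤ b := le_trans hs.2 (min_le_right _ _)
    refine ⟨s, hs.1, ?_, hsb, hseq, le_of_lt (hball ?_ ⟨hs.1, hsb⟩)⟩
    · have : min (η/2) (δ/2) ≤ δ/2 := min_le_right _ _
      linarith
    · rw [Real.dist_eq, abs_of_pos (sub_pos.2 hs.1)]
      have : min (η/2) (δ/2) ≤ η/2 := min_le_left _ _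
      linarith
  have key2 : ∃ s, b - δ/2 < s ∧ s < b ∧ a ≤ s ∧ γ' s = γ s ∧ edist (γ s) (γ b) ≤ ε₀ := by
    have hev : ∀ᶠ s in nhdsWithin b (Set.Ico a b), edist (γ s) (γ b) < ε₀ :=
      (EMetric.tendsto_nhds.1 hlcb) ε₀ hε₀pos
    rw [eventually_nhdsWithin_iff, Metric.eventually_nhds_iff] at hev
    obtain ⟨η, hη, hball⟩ := hev
    set r : ℝ := min (min (η/2) (δ/2)) ((b-a)/2) with hr
    have hrpos : 0 < r := lt_min (lt_min (by linarith) (by linarith)) (by linarith)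
    have hra : r ≤ (b-a)/2 := min_le_right _ _
    have hrδ : r ≤ δ/2 := le_trans (min_le_left _ _) (min_le_right _ _)
    have hrη : r ≤ η/2 := le_trans (min_le_left _ _) (min_le_left _ _)
    have hcd : b - r < b - r/2 := by linarith
    obtain ⟨s, hs, hseq⟩ := stmt14_dense hae hcd
      (fun x hx => ⟨by simp only [mem_Ioc] at hx; linarith [hx.1], by
        simp only [mem_Ioc] at hx; linarith [hx.2]⟩)
    have hsb : s < b := by linarith [hs.2]
    have hsa : a ≤ s := by linarith [hs.1]
    refine ⟨s, by linarith [hs.1], hsb, hsa, hseq, le_of_lt (hball ?_ ⟨hsa, hsb⟩)⟩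
    rw [Real.dist_eq, abs_of_neg (sub_neg.2 hsb)]
    linarith [hs.1]
  choose! ψ hψ1 hψ2 hψ3 hψ4 hψ5 using key1
  obtain ⟨sb, hsb1, hsb2, hsb3, hsb4, hsb5⟩ := key2
  set v : ℕ → ℝ := fun i => if w i = b then sb else ψ (w i) with hv
  have hwIco : ∀ i, w i ≠ b → w i ∈ Set.Ico a b :=
    fun i h => ⟨(hwmem i).1, lt_of_le_of_ne (hwmem i).2 h⟩
  have hvmem : ∀ i, v i ∈ Set.Icc a b := by
    intro i
    by_cases h : w i = b
    · rw [hv]; simp only [if_pos h]; exact ⟨hsb3, hsb2.le⟩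
    · rw [hv]; simp only [if_neg h]
      exact ⟨le_trans (hwIco i h).1 (hψ1 _ (hwIco i h)).le, hψ3 _ (hwIco i h)⟩
  have hveq : ∀ i, γ' (v i) = γ (v i) := by
    intro i
    by_cases h : w i = b
    · rw [hv]; simp only [if_pos h]; exact hsb4
    · rw [hv]; simp only [if_neg h]; exact hψ4 _ (hwIco i h)
  have hvclose : ∀ i, edist (γ (v i)) (γ (w i)) ≤ ε₀ := by
    intro i
    by_cases h : w i = b
    · rw [hv]; simp only [if_pos h, h]; exact hsb5
    · rw [hv]; simp only [if_neg h]; exact hψ5 _ (hwIco i h)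
  have hvmono : Monotone v := by
    intro i j hij
    by_cases hbi : w i = b
    · have hbj : w j = b := le_antisymm (hwmem j).2 (hbi ▸ hwmono hij)
      rw [hv]; simp only [if_pos hbi, if_pos hbj]; exact le_rfl
    · by_cases hbj : w j = b
      · rw [hv]; simp only [if_neg hbi, if_pos hbj]
        have h1 := hψ2 _ (hwIco i hbi)
        have h2 := hδ2 i (lt_of_le_of_ne (hwmem i).2 hbi)
        linarith
      · rw [hv]; simp only [if_neg hbi, if_neg hbj]
        rcases eq_or_lt_of_le (hwmono hij) with heq | hlt'
        · rw [heq]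
        · have h1 := hψ2 _ (hwIco i hbi)
          have h2 := hδ1 i j hlt'
          have h3 := hψ1 _ (hwIco j hbj)
          linarith
  have hterm : ∀ i, edist (γ (w (i+1))) (γ (w i)) ≤
      edist (γ' (v (i+1))) (γ' (v i)) + (ε₀ + ε₀) := by
    intro i
    calc edist (γ (w (i+1))) (γ (w i))
        ≤ edist (γ (w (i+1))) (γ (v (i+1))) + edist (γ (v (i+1))) (γ (v i))
          + edist (γ (v i)) (γ (w i)) := edist_triangle4 _ _ _ _
      _ ≤ ε₀ + edist (γ' (v (i+1))) (γ' (v i)) + ε₀ := by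
          rw [hveq (i+1), hveq i]
          gcongr
          · rw [edist_comm]; exact hvclose (i+1)
          · exact hvclose i
      _ = edist (γ' (v (i+1))) (γ' (v i)) + (ε₀ + ε₀) := by ring
  calc ∑ i ∈ Finset.range n, edist (γ (u (i + 1))) (γ (u i))
      = ∑ i ∈ Finset.range n, edist (γ (w (i + 1))) (γ (w i)) := by
        refine Finset.sum_congr rfl fun i hi => ?_
        rw [Finset.mem_range] at hi
        rw [hwagree (i+1) hi, hwagree i hi.le]
    _ ≤ ∑ i ∈ Finset.range n, (edist (γ' (v (i+1))) (γ' (v i)) + (ε₀ + ε₀)) :=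
        Finset.sum_le_sum fun i _ => hterm i
    _ = (∑ i ∈ Finset.range n, edist (γ' (v (i+1))) (γ' (v i))) + (n : ℝ≥0∞) * (ε₀ + ε₀) := by
        rw [Finset.sum_add_distrib, Finset.sum_const, Finset.card_range, nsmul_eq_mul]
    _ ≤ eVariationOn γ' (Set.Icc a b) + (n : ℝ≥0∞) * (ε₀ + ε₀) := by
        gcongr
        exact eVariationOn.sum_le (f := γ') (n := n) hvmono hvmem

/-- A right-continuous (on `[a,b)`), left-continuous at `b`,
bounded variation function `γ` minimizes the variation in its almost-everywhere
equivalence class: `V(γ) ≤ V(γ')` for every `γ' = γ` a.e., and hence the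
essential variation of the class of `γ` equals `V(γ)`. -/
theorem stmt14 {X : Type*} [MetricSpace X] {a b : ℝ} (hab : a ≤ b)
    (γ : ℝ → X) (hγ : BoundedVariationOn γ (Set.Icc a b))
    (hrc : ∀ t ∈ Set.Ico a b,
      Filter.Tendsto γ (nhdsWithin t (Set.Ioc t b)) (nhds (γ t)))
    (hlcb : Filter.Tendsto γ (nhdsWithin b (Set.Ico a b)) (nhds (γ b))) :
    (∀ γ' : ℝ → X,
      (∀ᵐ t ∂(MeasureTheory.volume.restrict (Set.Icc a b)), γ' t = γ t) →
      eVariationOn γ (Set.Icc a b) ≤ eVariationOn γ' (Set.Icc a b)) ∧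
    (⨅ γ' : {g : ℝ → X //
        ∀ᵐ t ∂(MeasureTheory.volume.restrict (Set.Icc a b)), g t = γ t},
      eVariationOn γ'.1 (Set.Icc a b)) = eVariationOn γ (Set.Icc a b) := by
  have main : ∀ γ' : ℝ → X,
      (∀ᵐ t ∂(MeasureTheory.volume.restrict (Set.Icc a b)), γ' t = γ t) →
      eVariationOn γ (Set.Icc a b) ≤ eVariationOn γ' (Set.Icc a b) := by
    intro γ' hae
    rcases eq_or_lt_of_le hab with rfl | hlt
    · rw [Set.Icc_self, eVariationOn.subsingleton γ Set.subsingleton_singleton]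
      exact zero_le
    refine iSup_le fun p => ?_
    obtain ⟨n, u, hu, hus⟩ := p
    refine ENNReal.le_of_forall_pos_le_add fun ε hε hfin => ?_
    set ε₀ : ℝ≥0∞ := (ε : ℝ≥0∞) / (2 * ((n : ℝ≥0∞) + 1)) with hε₀def
    have hε₀pos : 0 < ε₀ := ENNReal.div_pos (by exact_mod_cast hε.ne') (by finiteness)
    have hcore := stmt14_core γ hrc hlcb γ' hae hlt n u hu hus ε₀ hε₀pos
    refine le_trans hcore ?_
    show eVariationOn γ' (Set.Icc a b) + (n : ℝ≥0∞) * (ε₀ + ε₀) ≤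
      eVariationOn γ' (Set.Icc a b) + (ε : ℝ≥0∞)
    gcongr
    calc (n : ℝ≥0∞) * (ε₀ + ε₀) = (2 * ((n : ℝ≥0∞))) * ε₀ := by ring
      _ ≤ (2 * ((n : ℝ≥0∞) + 1)) * ε₀ := by gcongr; exact le_self_add
      _ = (2 * ((n : ℝ≥0∞) + 1)) * ((ε : ℝ≥0∞) / (2 * ((n : ℝ≥0∞) + 1))) := rfl
      _ ≤ (ε : ℝ≥0∞) := ENNReal.mul_div_le
  refine ⟨main, le_antisymm ?_ ?_⟩
  · exact iInf_le_of_le ⟨γ, Filter.Eventually.of_forall fun t => rfl⟩ le_rfl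
  · exact le_iInf fun γ' => main γ'.1 γ'.2
end

section
/- Let (X,d) be a complete metric space, a ≤ b reals, and M ≥ 0. Let γ_n, γ : [a,b] → X be Borel measurable maps with separable ranges such that γ_n → γ in Lebesgue measure on [a,b] (for every ε > 0 the Lebesgue measure of { t : d(γ_n(t), γ(t)) ≥ ε } tends to 0), and suppose for every n there exists γ_n' : [a,b] → X with V(γ_n') ≤ M and γ_n' = γ_n Lebesgue-almost everywhere. Then there exists γ' : [a,b] → X with V(γ') ≤ M and γ' = γ Lebesgue-almost everywhere; i.e. the essential variation of γ is at most M. -/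
open Set Filter Topology MeasureTheory


section Ext
variable {X : Type*} [MetricSpace X] [CompleteSpace X]

/-- cumulative variation -/
noncomputable def bvV (γ : ℝ → X) (S : Set ℝ) (x : ℝ) : ℝ :=
  (eVariationOn γ (S ∩ Set.Iic x)).toReal

open Classical in
noncomputable def bvF (S : Set ℝ) (a : ℝ) (t : ℝ) : Filter ℝ :=
  if t ∈ S then pure t else if t = a then 𝓝[S ∩ Set.Ioi a] a else 𝓝[S ∩ Set.Iio t] t

open Classical in
noncomputable def bvL (γ : ℝ → X) (S : Set ℝ) (a : ℝ) (t : ℝ) : ℝ :=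
  if t ∈ S then bvV γ S t else if t = a then sInf (bvV γ S '' Set.Ioi a)
  else sSup (bvV γ S '' Set.Iio t)

theorem extend_bv {a b : ℝ} (hab : a < b)
    {S : Set ℝ} (hSsub : S ⊆ Set.Icc a b)
    (hd : ∀ c t, a ≤ c → c < t → t ≤ b → (S ∩ Set.Ioo c t).Nonempty)
    (γ : ℝ → X) {M : ℝ} (hM : 0 ≤ M) (hS : eVariationOn γ S ≤ ENNReal.ofReal M) :
    ∃ γ' : ℝ → X, eVariationOn γ' (Set.Icc a b) ≤ ENNReal.ofReal M ∧ ∀ t ∈ S, γ' t = γ t := by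
  classical
  set v : ℝ → ℝ := bvV γ S with hvdef
  have hVle : ∀ x, eVariationOn γ (S ∩ Set.Iic x) ≤ ENNReal.ofReal M :=
    fun x => le_trans (eVariationOn.mono γ inter_subset_left) hS
  have hVne : ∀ x, eVariationOn γ (S ∩ Set.Iic x) ≠ ⊤ :=
    fun x => ne_top_of_le_ne_top ENNReal.ofReal_ne_top (hVle x)
  have hv0 : ∀ x, 0 ≤ v x := fun x => ENNReal.toReal_nonneg
  have hvM : ∀ x, v x ≤ M := by
    intro x
    have := ENNReal.toReal_mono ENNReal.ofReal_ne_top (hVle x)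
    rwa [ENNReal.toReal_ofReal hM] at this
  have hvmono : Monotone v := by
    intro x y hxy
    exact ENNReal.toReal_mono (hVne y)
      (eVariationOn.mono γ (inter_subset_inter_right S (Iic_subset_Iic.2 hxy)))
  have key : ∀ s ∈ S, ∀ s' ∈ S, s ≤ s' → dist (γ s) (γ s') ≤ v s' - v s := by
    intro s hs s' hs' hss
    have h1 : eVariationOn γ (S ∩ Set.Iic s) + edist (γ s) (γ s')
        ≤ eVariationOn γ (S ∩ Set.Iic s') := by
      have hedist : edist (γ s) (γ s') ≤ eVariationOn γ (S ∩ Set.Icc s s') :=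
        eVariationOn.edist_le γ ⟨hs, le_refl s, hss⟩ ⟨hs', hss, le_refl s'⟩
      have hadd : eVariationOn γ (S ∩ Set.Iic s) + eVariationOn γ (S ∩ Set.Icc s s')
          ≤ eVariationOn γ ((S ∩ Set.Iic s) ∪ (S ∩ Set.Icc s s')) :=
        eVariationOn.add_le_union γ (fun x hx y hy => le_trans hx.2 hy.2.1)
      have hsub : (S ∩ Set.Iic s) ∪ (S ∩ Set.Icc s s') ⊆ S ∩ Set.Iic s' := by
        rintro x (⟨hxS, hx⟩ | ⟨hxS, hx⟩)
        · exact ⟨hxS, le_trans hx hss⟩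
        · exact ⟨hxS, hx.2⟩
      calc eVariationOn γ (S ∩ Set.Iic s) + edist (γ s) (γ s')
          ≤ eVariationOn γ (S ∩ Set.Iic s) + eVariationOn γ (S ∩ Set.Icc s s') :=
            add_le_add_right hedist _
        _ ≤ eVariationOn γ ((S ∩ Set.Iic s) ∪ (S ∩ Set.Icc s s')) := hadd
        _ ≤ eVariationOn γ (S ∩ Set.Iic s') := eVariationOn.mono γ hsub
    have h2 : edist (γ s) (γ s') ≤ eVariationOn γ (S ∩ Set.Iic s') - eVariationOn γ (S ∩ Set.Iic s) :=
      ENNReal.le_sub_of_add_le_left (hVne s) h1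
    have h3 := ENNReal.toReal_mono (by
      exact ne_top_of_le_ne_top (hVne s') (tsub_le_self)) h2
    rw [ENNReal.toReal_sub_of_le (eVariationOn.mono γ
      (inter_subset_inter_right S (Iic_subset_Iic.2 hss))) (hVne s')] at h3
    rw [dist_edist]
    exact h3

  -- the filters and limit candidates
  set L : ℝ → ℝ := bvL γ S a with hLdef
  set F : ℝ → Filter ℝ := bvF S a with hFdef
  have hne : ∀ t ∈ Set.Icc a b, (F t).NeBot := by
    intro t ht
    rw [hFdef]; unfold bvF
    split_ifs with h1 h2
    · exact pure_neBot
    · refine mem_closure_iff_nhdsWithin_neBot.1 ?_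
      rw [Metric.mem_closure_iff]
      intro ε hε
      obtain ⟨s₀, hs₀S, hs₀⟩ := hd a (min b (a+ε)) le_rfl (lt_min hab (by linarith)) (min_le_left _ _)
      have hlt : s₀ < a + ε := lt_of_lt_of_le hs₀.2 (min_le_right _ _)
      refine ⟨s₀, ⟨hs₀S, hs₀.1⟩, ?_⟩
      rw [Real.dist_eq, abs_lt]
      constructor <;> linarith [hs₀.1, hlt]
    · have hat : a < t := lt_of_le_of_ne ht.1 (Ne.symm h2)
      refine mem_closure_iff_nhdsWithin_neBot.1 ?_
      rw [Metric.mem_closure_iff]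
      intro ε hε
      obtain ⟨s₀, hs₀S, hs₀⟩ := hd (max a (t-ε)) t (le_max_left _ _)
        (max_lt hat (by linarith)) ht.2
      have hgt : t - ε < s₀ := lt_of_le_of_lt (le_max_right _ _) hs₀.1
      refine ⟨s₀, ⟨hs₀S, hs₀.2⟩, ?_⟩
      rw [Real.dist_eq, abs_lt]
      constructor <;> linarith [hs₀.2, hgt]
  have hvt : ∀ t ∈ Set.Icc a b, Tendsto v (F t) (𝓝 (L t)) := by
    intro t ht
    rw [hFdef, hLdef]; unfold bvF bvL
    split_ifs with h1 h2
    · exact tendsto_pure_nhds v t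
    · exact (hvmono.tendsto_nhdsGT _).mono_left (nhdsWithin_mono _ inter_subset_right)
    · exact (hvmono.tendsto_nhdsLT t).mono_left (nhdsWithin_mono _ inter_subset_right)
  have hL0 : ∀ t ∈ Set.Icc a b, 0 ≤ L t := by
    intro t ht
    rw [hLdef]; unfold bvL
    split_ifs with h1 h2
    · exact hv0 t
    · refine le_csInf ((Set.nonempty_Ioi).image _) ?_
      rintro y ⟨x, -, rfl⟩; exact hv0 x
    · have hle : v (t-1) ≤ sSup (v '' Set.Iio t) :=
        le_csSup ⟨M, by rintro y ⟨x, -, rfl⟩; exact hvM x⟩ ⟨t-1, by simp, rfl⟩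
      exact le_trans (hv0 (t-1)) hle
  have hLM : ∀ t ∈ Set.Icc a b, L t ≤ M := by
    intro t ht
    rw [hLdef]; unfold bvL
    split_ifs with h1 h2
    · exact hvM t
    · exact csInf_le_of_le ⟨0, by rintro y ⟨x, -, rfl⟩; exact hv0 x⟩ ⟨a+1, by simp, rfl⟩ (hvM _)
    · refine csSup_le ((Set.nonempty_Iio).image _) ?_
      rintro y ⟨x, -, rfl⟩; exact hvM x
  have hFS : ∀ t, ∀ᶠ s in F t, s ∈ S := by
    intro t
    rw [hFdef]; unfold bvF
    split_ifs with h1 h2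
    · exact eventually_pure.2 h1
    · exact eventually_mem_nhdsWithin.mono fun s hs => hs.1
    · exact eventually_mem_nhdsWithin.mono fun s hs => hs.1
  have key' : ∀ s ∈ S, ∀ s' ∈ S, dist (γ s) (γ s') ≤ |v s - v s'| := by
    intro s hs s' hs'
    rcases le_total s s' with h | h
    · refine le_trans (key s hs s' hs' h) ?_
      rw [abs_sub_comm]
      exact le_abs_self _
    · rw [dist_comm]
      exact le_trans (key s' hs' s hs h) (le_abs_self _)
  have hex : ∀ t, ∃ p : X, t ∈ Set.Icc a b → Tendsto γ (F t) (𝓝 p) := by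
    intro t
    by_cases ht : t ∈ Set.Icc a b
    · haveI := hne t ht
      have hc : Cauchy (map γ (F t)) := by
        refine Metric.cauchy_iff.2 ⟨Filter.map_neBot, fun ε hε => ?_⟩
        have hev : ∀ᶠ s in F t, s ∈ S ∧ dist (v s) (L t) < ε/3 :=
          (hFS t).and ((Metric.tendsto_nhds.1 (hvt t ht)) (ε/3) (by linarith))
        refine ⟨γ '' {s | s ∈ S ∧ dist (v s) (L t) < ε/3}, ?_, ?_⟩
        · rw [mem_map]
          exact mem_of_superset hev (subset_preimage_image γ _)
        · rintro x ⟨s, hs, rfl⟩ y ⟨s', hs', rfl⟩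
          refine lt_of_le_of_lt (key' s hs.1 s' hs'.1) ?_
          have h1 : |v s - v s'| ≤ dist (v s) (L t) + dist (v s') (L t) := by
            rw [Real.dist_eq, Real.dist_eq]
            calc |v s - v s'| = |(v s - L t) + (L t - v s')| := by ring_nf
              _ ≤ |v s - L t| + |L t - v s'| := abs_add_le _ _
              _ = |v s - L t| + |v s' - L t| := by rw [abs_sub_comm (L t)]
          linarith [hs.2, hs'.2]
      obtain ⟨p, hp⟩ := CompleteSpace.complete hc
      exact ⟨p, fun _ => hp⟩
    · exact ⟨γ t, fun h => absurd h ht⟩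
  choose γ' hγ' using hex
  have hγ'S : ∀ t ∈ S, γ' t = γ t := by
    intro t ht
    have h1 := hγ' t (hSsub ht)
    have hFt : F t = pure t := by rw [hFdef]; unfold bvF; rw [if_pos ht]
    rw [hFt] at h1
    exact tendsto_nhds_unique h1 (tendsto_pure_nhds γ t)
  have master : ∀ x ∈ Set.Icc a b, ∀ y ∈ Set.Icc a b, x ≤ y →
      dist (γ' x) (γ' y) ≤ L y - L x := by
    intro x hx y hy hxy
    rcases eq_or_lt_of_le hxy with rfl | hlt
    · simp
    haveI := hne x hx; haveI := hne y hy
    have hdist : Tendsto (fun p : ℝ × ℝ => dist (γ p.1) (γ p.2)) ((F x) ×ˢ (F y))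
        (𝓝 (dist (γ' x) (γ' y))) :=
      ((hγ' x hx).comp tendsto_fst).dist ((hγ' y hy).comp tendsto_snd)
    have hvd : Tendsto (fun p : ℝ × ℝ => v p.2 - v p.1) ((F x) ×ˢ (F y)) (𝓝 (L y - L x)) :=
      ((hvt y hy).comp tendsto_snd).sub ((hvt x hx).comp tendsto_fst)
    have hm : ∃ m, m < y ∧ ∀ᶠ s in F x, s ≤ m := by
      rw [hFdef]; unfold bvF
      split_ifs with h1 h2
      · exact ⟨x, hlt, eventually_pure.2 le_rfl⟩
      · refine ⟨(x + y)/2, by linarith, ?_⟩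
        exact eventually_nhdsWithin_of_eventually_nhds
          ((eventually_lt_nhds (by rw [← h2]; linarith : a < (x+y)/2)).mono fun s hs => hs.le)
      · exact ⟨x, hlt, eventually_mem_nhdsWithin.mono fun s hs => hs.2.le⟩
    obtain ⟨m, hmy, hmx⟩ := hm
    have hmy' : ∀ᶠ s' in F y, m ≤ s' := by
      rw [hFdef]; unfold bvF
      split_ifs with h1 h2
      · exact eventually_pure.2 hmy.le
      · exfalso; rw [h2] at hlt; linarith [hx.1]
      · exact eventually_nhdsWithin_of_eventually_nhds
          ((eventually_gt_nhds hmy).mono fun s hs => hs.le)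
    have hev : ∀ᶠ p : ℝ × ℝ in (F x) ×ˢ (F y), dist (γ p.1) (γ p.2) ≤ v p.2 - v p.1 := by
      filter_upwards [hmx.prod_inl (F y), (hFS x).prod_inl (F y),
        hmy'.prod_inr (F x), (hFS y).prod_inr (F x)] with p h1 h2 h3 h4
      exact key p.1 h2 p.2 h4 (h1.trans h3)
    exact le_of_tendsto_of_tendsto hdist hvd hev
  refine ⟨γ', ?_, hγ'S⟩
  dsimp only [eVariationOn]
  refine iSup_le ?_
  rintro ⟨n, ⟨u, hu, hus⟩⟩
  have hnn : ∀ i, 0 ≤ L (u (i+1)) - L (u i) := fun i =>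
    le_trans dist_nonneg (master (u i) (hus i) (u (i+1)) (hus _) (hu (Nat.le_succ i)))
  calc ∑ i ∈ Finset.range n, edist (γ' (u (i+1))) (γ' (u i))
      ≤ ∑ i ∈ Finset.range n, ENNReal.ofReal (L (u (i+1)) - L (u i)) := by
        refine Finset.sum_le_sum fun i _ => ?_
        rw [edist_dist, dist_comm]
        exact ENNReal.ofReal_le_ofReal
          (master (u i) (hus i) (u (i+1)) (hus _) (hu (Nat.le_succ i)))
    _ = ENNReal.ofReal (∑ i ∈ Finset.range n, (L (u (i+1)) - L (u i))) :=
        (ENNReal.ofReal_sum_of_nonneg fun i _ => hnn i).symm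
    _ ≤ ENNReal.ofReal M := by
        rw [Finset.sum_range_sub (fun i => L (u i))]
        exact ENNReal.ofReal_le_ofReal
          (by linarith [hL0 (u 0) (hus 0), hLM (u n) (hus n)])
end Ext


/-- In a complete metric space, the essential variation is lower
semicontinuous along convergence in measure: if `γ_n → γ` in Lebesgue measure
on `[a,b]` and each `γ_n` has a representative of variation at most `M`, then
so does `γ`. -/
theorem stmt16 {X : Type*} [MetricSpace X] [CompleteSpace X]
    [MeasurableSpace X] [BorelSpace X]
    {a b : ℝ} (hab : a ≤ b) {M : ℝ} (hM : 0 ≤ M)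
    (γn : ℕ → ℝ → X) (γ : ℝ → X)
    (hmeasn : ∀ n, Measurable fun t : Set.Icc a b => γn n t)
    (hmeas : Measurable fun t : Set.Icc a b => γ t)
    (hsepn : ∀ n, TopologicalSpace.IsSeparable (γn n '' Set.Icc a b))
    (hsep : TopologicalSpace.IsSeparable (γ '' Set.Icc a b))
    (htm : ∀ ε > (0 : ℝ), Filter.Tendsto
      (fun n => MeasureTheory.volume
        {t | t ∈ Set.Icc a b ∧ ε ≤ dist (γn n t) (γ t)})
      Filter.atTop (nhds 0))
    (hvar : ∀ n, ∃ g : ℝ → X,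
      eVariationOn g (Set.Icc a b) ≤ ENNReal.ofReal M ∧
      (∀ᵐ t ∂(MeasureTheory.volume.restrict (Set.Icc a b)), g t = γn n t)) :
    ∃ γ' : ℝ → X, eVariationOn γ' (Set.Icc a b) ≤ ENNReal.ofReal M ∧
      (∀ᵐ t ∂(MeasureTheory.volume.restrict (Set.Icc a b)), γ' t = γ t) := by
  rcases eq_or_lt_of_le hab with rfl | hab'
  · refine ⟨γ, ?_, Filter.Eventually.of_forall fun t => rfl⟩
    rw [Set.Icc_self, eVariationOn.subsingleton γ Set.subsingleton_singleton]
    exact zero_le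
  · set μ := volume.restrict (Set.Icc a b) with hμ
    choose g hg hgae using hvar
    have htm' : TendstoInMeasure μ γn atTop γ := by
      rw [tendstoInMeasure_iff_dist]
      intro ε hε
      have heq : ∀ n, μ {x | ε ≤ dist (γn n x) (γ x)} =
          volume {t | t ∈ Set.Icc a b ∧ ε ≤ dist (γn n t) (γ t)} := by
        intro n
        rw [hμ, Measure.restrict_apply' measurableSet_Icc]
        congr 1
        ext t; simp only [Set.mem_inter_iff, Set.mem_setOf_eq]; tauto
      simp_rw [heq]
      exact htm ε hε
    have htm'' : TendstoInMeasure μ g atTop γ :=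
      MeasureTheory.TendstoInMeasure.congr_left
      (fun n => ((hgae n).mono fun x hx => hx.symm : γn n =ᶠ[MeasureTheory.ae μ] g n)) htm'
    obtain ⟨ns, hns, hae⟩ := htm''.exists_seq_tendsto_ae
    set S := {x | x ∈ Set.Icc a b ∧ Tendsto (fun i => g (ns i) x) atTop (𝓝 (γ x))} with hSdef
    have hSsub : S ⊆ Set.Icc a b := fun x hx => hx.1
    have hnull : μ {x | ¬ Tendsto (fun i => g (ns i) x) atTop (𝓝 (γ x))} = 0 :=
      MeasureTheory.ae_iff.1 hae
    have hvol : volume ((Set.Icc a b) \ S) = 0 := by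
      have hsub : (Set.Icc a b \ S) ⊆
          {x | ¬ Tendsto (fun i => g (ns i) x) atTop (𝓝 (γ x))} ∩ Set.Icc a b :=
        fun x hx => ⟨fun h => hx.2 ⟨hx.1, h⟩, hx.1⟩
      refine measure_mono_null hsub ?_
      rw [← Measure.restrict_apply' measurableSet_Icc]
      exact hnull
    have hd : ∀ c t, a ≤ c → c < t → t ≤ b → (S ∩ Set.Ioo c t).Nonempty := by
      intro c t hac hct htb
      by_contra h
      rw [Set.not_nonempty_iff_eq_empty] at h
      have hsub : Set.Ioo c t ⊆ Set.Icc a b \ S := by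
        intro x hx
        refine ⟨⟨hac.trans hx.1.le, hx.2.le.trans htb⟩, fun hxS => ?_⟩
        exact Set.eq_empty_iff_forall_notMem.1 h x ⟨hxS, hx⟩
      have h0 := measure_mono_null hsub hvol
      rw [Real.volume_Ioo] at h0
      simp only [ENNReal.ofReal_eq_zero] at h0
      linarith
    have hSvar : eVariationOn γ S ≤ ENNReal.ofReal M := by
      by_contra h
      push_neg at h
      have hev := eVariationOn.lowerSemicontinuous_aux
        (F := fun i => g (ns i)) (p := atTop) (fun x hx => hx.2) h
      obtain ⟨n, hn⟩ := hev.exists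
      have hle : eVariationOn (g (ns n)) S ≤ ENNReal.ofReal M :=
        le_trans (eVariationOn.mono _ hSsub) (hg (ns n))
      exact absurd hle (not_le.2 hn)
    obtain ⟨γ', hγ'var, hγ'S⟩ := extend_bv hab' hSsub hd γ hM hSvar
    refine ⟨γ', hγ'var, ?_⟩
    have h1 : ∀ᵐ x ∂μ, x ∈ Set.Icc a b := ae_restrict_mem measurableSet_Icc
    filter_upwards [h1, hae] with x hx htend
    exact hγ'S x ⟨hx, htend⟩
end

section
/- Let (X,d) be a metric space and a ≤ b reals. Let γ_n, γ : [a,b] → X all be test curves, i.e. of bounded variation, right-continuous on [a,b), left-continuous at b, and with left limits existing at every t ∈ (a,b). If γ_n → γ in Lebesgue measure on [a,b] (for every ε > 0 the Lebesgue measure of { t : d(γ_n(t), γ(t)) ≥ ε } tends to 0), then V(γ) ≤ liminf_{n→∞} V(γ_n). In other words, the variation functional is lower semicontinuous on test curves with respect to convergence in measure. -/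
/-- A test curve on `[a,b]`: bounded variation, right-continuous on `[a,b)`,
left-continuous at `b`, and left limits exist at every point of `(a,b)`. -/
def IsTestCurve {X : Type*} [MetricSpace X] (a b : ℝ) (γ : ℝ → X) : Prop :=
  BoundedVariationOn γ (Set.Icc a b) ∧
  (∀ t ∈ Set.Ico a b,
    Filter.Tendsto γ (nhdsWithin t (Set.Ioc t b)) (nhds (γ t))) ∧
  Filter.Tendsto γ (nhdsWithin b (Set.Ico a b)) (nhds (γ b)) ∧
  ∀ t ∈ Set.Ioo a b, ∃ x : X,
    Filter.Tendsto γ (nhdsWithin t (Set.Ico a t)) (nhds x)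

open Set Filter MeasureTheory in

lemma evar_le_of_right_dense {X : Type*} [MetricSpace X] {a b : ℝ} {γ : ℝ → X}
    (hrc : ∀ t ∈ Set.Ico a b, Tendsto γ (nhdsWithin t (Set.Ioc t b)) (nhds (γ t)))
    (hlc : Tendsto γ (nhdsWithin b (Set.Ico a b)) (nhds (γ b)))
    {S : Set ℝ} (hSsub : S ⊆ Set.Ioo a b)
    (hdense : ∀ t, a ≤ t → t < b → ∀ δ > (0:ℝ), (S ∩ Set.Ioo t (min (t+δ) b)).Nonempty) :
    eVariationOn γ (Set.Icc a b) ≤ eVariationOn γ S := by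
  have key : ∀ n : ℕ, ∀ u : ℕ → ℝ, Monotone u → (∀ i, u i ∈ Set.Icc a b) → ∀ δ : ℝ, 0 < δ →
      ∑ i ∈ Finset.range n, edist (γ (u (i+1))) (γ (u i)) ≤
        eVariationOn γ S + ENNReal.ofReal δ := by
    intro n
    induction n using Nat.strong_induction_on with
    | _ n IH =>
      intro u hu us δ hδ
      rcases Nat.eq_zero_or_pos n with hn0 | hn0
      · subst hn0; simp
      by_cases hdup : ∃ i, i < n ∧ u i = u (i + 1)
      · -- remove a duplicate
        obtain ⟨i, hin, hieq⟩ := hdup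
        set u' : ℕ → ℝ := fun j => if j ≤ i then u j else u (j + 1) with hu'def
        have hu' : Monotone u' := by
          intro j k hjk
          simp only [hu'def]
          split_ifs with h1 h2 h2
          · exact hu hjk
          · exact hu (by omega)
          · exact hu (by omega)
          · exact hu (by omega)
        have us' : ∀ j, u' j ∈ Set.Icc a b := by
          intro j; simp only [hu'def]; split_ifs; exacts [us _, us _]
        have hkey := IH (n-1) (by omega) u' hu' us' δ hδ
        refine le_trans (le_of_eq ?_) hkey
        have hFi : edist (γ (u (i+1))) (γ (u i)) = 0 := by rw [hieq]; exact edist_self _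
        rw [← Finset.sum_erase (Finset.range n) hFi]
        refine Finset.sum_bij' (i := fun j _ => if j < i then j else j - 1)
          (j := fun j _ => if j < i then j else j + 1) ?_ ?_ ?_ ?_ ?_
        · intro j hj
          simp only [Finset.mem_erase, Finset.mem_range] at hj
          simp only [Finset.mem_range]
          split_ifs <;> omega
        · intro j hj
          simp only [Finset.mem_range] at hj
          simp only [Finset.mem_erase, Finset.mem_range]
          split_ifs <;> omega
        · intro j hj
          simp only [Finset.mem_erase, Finset.mem_range] at hj
          split_ifs <;> omega
        · intro j hj
          simp only [Finset.mem_range] at hj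
          split_ifs <;> omega
        · intro j hj
          simp only [Finset.mem_erase, Finset.mem_range] at hj
          by_cases hji : j < i
          · rw [if_pos hji]
            simp only [hu'def]
            rw [if_pos (by omega : j + 1 ≤ i), if_pos (by omega : j ≤ i)]
          · rw [if_neg hji]
            have hij : i < j := by omega
            have h1 : j - 1 + 1 = j := by omega
            rw [h1]
            simp only [hu'def]
            rw [if_neg (by omega : ¬ j ≤ i)]
            by_cases h2 : j - 1 ≤ i
            · rw [if_pos h2]
              have h3 : j - 1 = i := by omega
              have h4 : j = i + 1 := by omega
              rw [h3, hieq, h4]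
            · rw [if_neg h2]
              have h5 : j - 1 + 1 = j := by omega
              rw [h5]
      · -- strictly increasing case
        have hstrict : ∀ i, i < n → u i < u (i+1) := by
          intro i hi
          exact lt_of_le_of_ne (hu (Nat.le_succ i)) fun h => hdup ⟨i, hi, h⟩
        set ε : ℝ := δ / (2 * n + 2) with hεdef
        have hε : 0 < ε := by positivity
        have hΔ : ∀ t ∈ Set.Ico a b, ∃ Δ > (0:ℝ),
            ∀ x ∈ Set.Ioc t b, dist x t < Δ → dist (γ x) (γ t) < ε := by
          intro t ht
          obtain ⟨Δ, hΔ0, hΔ⟩ := (Metric.tendsto_nhdsWithin_nhds).1 (hrc t ht) ε hε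
          exact ⟨Δ, hΔ0, fun x hx hd => hΔ hx hd⟩
        have hex : ∀ i, ∃ s : ℝ, i < n →
            s ∈ S ∧ u i < s ∧ s < u (i+1) ∧ dist (γ s) (γ (u i)) < ε := by
          intro i
          by_cases hi : i < n
          · have hub : u i < b := lt_of_lt_of_le (hstrict i hi) (us (i+1)).2
            obtain ⟨Δ, hΔ0, hΔp⟩ := hΔ (u i) ⟨(us i).1, hub⟩
            have hδ0 : 0 < min Δ (u (i+1) - u i) := lt_min hΔ0 (sub_pos.2 (hstrict i hi))
            obtain ⟨s, hsS, hs⟩ := hdense (u i) (us i).1 hub _ hδ0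
            have hs1 : u i < s := hs.1
            have hs2 : s < u i + min Δ (u (i+1) - u i) :=
              lt_of_lt_of_le hs.2 (min_le_left _ _)
            have hmin1 : min Δ (u (i+1) - u i) ≤ Δ := min_le_left _ _
            have hmin2 : min Δ (u (i+1) - u i) ≤ u (i+1) - u i := min_le_right _ _
            refine ⟨s, fun _ => ⟨hsS, hs1, by linarith, ?_⟩⟩
            refine hΔp s ⟨hs1, (hSsub hsS).2.le⟩ ?_
            rw [Real.dist_eq, abs_of_pos (by linarith)]
            linarith
          · exact ⟨0, fun h => absurd h hi⟩
        choose f hf using hex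
        have hn1 : n - 1 < n := by omega
        have hfS : f (n-1) ∈ S := (hf (n-1) hn1).1
        obtain ⟨w, hwS, hwgt, hwdist⟩ :
            ∃ w, w ∈ S ∧ f (n-1) < w ∧ dist (γ w) (γ (u n)) < ε := by
          by_cases hbn : u n = b
          · obtain ⟨Δb, hΔb0, hΔb⟩ := (Metric.tendsto_nhdsWithin_nhds).1 hlc ε hε
            set t0 : ℝ := max (f (n-1)) (b - Δb) with ht0def
            have ht0a : a ≤ t0 := le_trans (hSsub hfS).1.le (le_max_left _ _)
            have ht0b : t0 < b := max_lt (hSsub hfS).2 (by linarith)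
            obtain ⟨s, hsS, hs⟩ := hdense t0 ht0a ht0b (b - t0) (by linarith)
            have hsb : s < b := lt_of_lt_of_le hs.2 (min_le_right _ _)
            refine ⟨s, hsS, lt_of_le_of_lt (le_max_left _ _) hs.1, ?_⟩
            rw [hbn]
            refine hΔb ⟨(hSsub hsS).1.le, hsb⟩ ?_
            rw [Real.dist_eq, abs_of_neg (by linarith)]
            have : b - Δb ≤ t0 := le_max_right _ _
            have := hs.1
            linarith
          · have hub : u n < b := lt_of_le_of_ne (us n).2 hbn
            obtain ⟨Δ, hΔ0, hΔp⟩ := hΔ (u n) ⟨(us n).1, hub⟩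
            obtain ⟨s, hsS, hs⟩ := hdense (u n) (us n).1 hub Δ hΔ0
            have hs2 : s < u n + Δ := lt_of_lt_of_le hs.2 (min_le_left _ _)
            have hfn : f (n-1) < u n := by
              have := (hf (n-1) hn1).2.2.1
              rwa [Nat.sub_add_cancel hn0] at this
            refine ⟨s, hsS, lt_trans hfn hs.1, ?_⟩
            refine hΔp s ⟨hs.1, (hSsub hsS).2.le⟩ ?_
            rw [Real.dist_eq, abs_of_pos (by linarith [hs.1])]
            linarith
        set v : ℕ → ℝ := fun j => if j < n then f j else w with hvdef
        have hvS : ∀ j, v j ∈ S := by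
          intro j; simp only [hvdef]; split_ifs with h
          exacts [(hf j h).1, hwS]
        have hvmono : Monotone v := by
          apply monotone_nat_of_le_succ
          intro j
          simp only [hvdef]
          by_cases h1 : j + 1 < n
          · rw [if_pos (by omega), if_pos h1]
            exact le_of_lt (lt_trans (hf j (by omega)).2.2.1 (hf (j+1) h1).2.1)
          · by_cases h2 : j < n
            · rw [if_pos h2, if_neg h1]
              have : j = n - 1 := by omega
              rw [this]
              exact hwgt.le
            · rw [if_neg h2, if_neg h1]
        have hvd : ∀ i, i ≤ n → dist (γ (v i)) (γ (u i)) < ε := by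
          intro i hi
          simp only [hvdef]
          rcases lt_or_eq_of_le hi with h | h
          · rw [if_pos h]; exact (hf i h).2.2.2
          · subst h; rw [if_neg (lt_irrefl _)]; exact hwdist
        calc ∑ i ∈ Finset.range n, edist (γ (u (i+1))) (γ (u i))
            ≤ ∑ i ∈ Finset.range n, (edist (γ (v (i+1))) (γ (v i))
                + (ENNReal.ofReal ε + ENNReal.ofReal ε)) := by
              refine Finset.sum_le_sum fun i hi => ?_
              simp only [Finset.mem_range] at hi
              have h4 := edist_triangle4 (γ (u (i+1))) (γ (v (i+1))) (γ (v i)) (γ (u i))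
              have hx : edist (γ (u (i+1))) (γ (v (i+1))) ≤ ENNReal.ofReal ε := by
                rw [edist_dist, dist_comm]
                exact ENNReal.ofReal_le_ofReal (hvd (i+1) (by omega)).le
              have hy : edist (γ (v i)) (γ (u i)) ≤ ENNReal.ofReal ε := by
                rw [edist_dist]
                exact ENNReal.ofReal_le_ofReal (hvd i (by omega)).le
              calc edist (γ (u (i+1))) (γ (u i))
                  ≤ edist (γ (u (i+1))) (γ (v (i+1))) + edist (γ (v (i+1))) (γ (v i))
                    + edist (γ (v i)) (γ (u i)) := h4
                _ ≤ ENNReal.ofReal ε + edist (γ (v (i+1))) (γ (v i)) + ENNReal.ofReal ε :=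
                    add_le_add (add_le_add hx le_rfl) hy
                _ = edist (γ (v (i+1))) (γ (v i)) + (ENNReal.ofReal ε + ENNReal.ofReal ε) := by
                    ring
          _ = (∑ i ∈ Finset.range n, edist (γ (v (i+1))) (γ (v i)))
                + n * (ENNReal.ofReal ε + ENNReal.ofReal ε) := by
              rw [Finset.sum_add_distrib, Finset.sum_const, Finset.card_range, nsmul_eq_mul]
          _ ≤ eVariationOn γ S + ENNReal.ofReal δ := by
              refine add_le_add (eVariationOn.sum_le (f := γ) (n := n) hvmono hvS) ?_
              rw [← ENNReal.ofReal_add hε.le hε.le, ← ENNReal.ofReal_natCast n,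
                ← ENNReal.ofReal_mul (Nat.cast_nonneg n)]
              refine ENNReal.ofReal_le_ofReal ?_
              have hc : (0:ℝ) < 2 * (n:ℝ) + 2 := by positivity
              have h1 : δ / (2*(n:ℝ)+2) * (2*(n:ℝ)+2) = δ := div_mul_cancel₀ _ hc.ne'
              have hεnn : 0 ≤ ε := hε.le
              have hcn : (0:ℝ) ≤ (n:ℝ) := Nat.cast_nonneg n
              simp only [hεdef] at *
              nlinarith [h1, hδ.le]
  refine iSup_le fun p => ?_
  obtain ⟨n, u, hu, us⟩ := p
  refine ENNReal.le_of_forall_pos_le_add fun ε' hε' _ => ?_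
  have := key n u hu us ε' (by exact_mod_cast hε')
  simpa [ENNReal.ofReal_coe_nnreal] using this

open Set Filter MeasureTheory in
/-- The variation functional is lower semicontinuous on test
curves with respect to convergence in Lebesgue measure on `[a,b]`. -/
theorem stmt17 {X : Type*} [MetricSpace X] {a b : ℝ} (hab : a ≤ b)
    (γn : ℕ → ℝ → X) (γ : ℝ → X)
    (htcn : ∀ n, IsTestCurve a b (γn n)) (htc : IsTestCurve a b γ)
    (htm : ∀ ε > (0 : ℝ), Filter.Tendsto
      (fun n => MeasureTheory.volume
        {t | t ∈ Set.Icc a b ∧ ε ≤ dist (γn n t) (γ t)})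
      Filter.atTop (nhds 0)) :
    eVariationOn γ (Set.Icc a b) ≤
      Filter.liminf (fun n => eVariationOn (γn n) (Set.Icc a b))
        Filter.atTop := by
  rcases eq_or_lt_of_le hab with rfl | hab'
  · rw [eVariationOn.subsingleton γ (by simp [Set.Icc_self] : (Set.Icc a a).Subsingleton)]
    exact zero_le
  by_contra hcon
  push_neg at hcon
  obtain ⟨v, hLv, hvV⟩ := exists_between hcon
  have hfreq : ∃ᶠ n in atTop, eVariationOn (γn n) (Set.Icc a b) < v :=
    frequently_lt_of_liminf_lt (by isBoundedDefault) hLv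
  obtain ⟨φ, hφ, hφv⟩ := extraction_of_frequently_atTop hfreq
  set μ : Measure ℝ := volume.restrict (Set.Icc a b) with hμdef
  have htim : TendstoInMeasure μ (fun k => γn (φ k)) atTop γ := by
    rw [tendstoInMeasure_iff_dist]
    intro ε hε
    have h1 := (htm ε hε).comp hφ.tendsto_atTop
    convert h1 using 2 with k
    rw [hμdef, Measure.restrict_apply' measurableSet_Icc]
    congr 1
    ext t
    simp only [Set.mem_inter_iff, Set.mem_setOf_eq]
    tauto
  obtain ⟨ns, hns, hae⟩ := htim.exists_seq_tendsto_ae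
  set T : Set ℝ := {x | Tendsto (fun i => γn (φ (ns i)) x) atTop (nhds (γ x))} with hTdef
  have hT0 : μ Tᶜ = 0 := by
    rw [MeasureTheory.ae_iff] at hae
    exact hae
  set S : Set ℝ := T ∩ Set.Ioo a b with hSdef
  have hSsub : S ⊆ Set.Ioo a b := Set.inter_subset_right
  have hdense : ∀ t, a ≤ t → t < b → ∀ δ > (0:ℝ), (S ∩ Set.Ioo t (min (t+δ) b)).Nonempty := by
    intro t hta htb δ hδ
    by_contra hemp
    rw [Set.not_nonempty_iff_eq_empty] at hemp
    have hIsub : Set.Ioo t (min (t+δ) b) ⊆ Set.Ioo a b := fun x hx =>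
      ⟨lt_of_le_of_lt hta hx.1, lt_of_lt_of_le hx.2 (min_le_right _ _)⟩
    have hIc : Set.Ioo t (min (t+δ) b) ⊆ Tᶜ := by
      intro x hx
      simp only [Set.mem_compl_iff]
      intro hxT
      rw [Set.eq_empty_iff_forall_notMem] at hemp
      exact hemp x ⟨⟨hxT, hIsub hx⟩, hx⟩
    have h1 : μ (Set.Ioo t (min (t+δ) b)) = 0 :=
      le_antisymm (le_trans (measure_mono hIc) hT0.le) zero_le
    have h2 : μ (Set.Ioo t (min (t+δ) b)) = volume (Set.Ioo t (min (t+δ) b)) := by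
      rw [hμdef, Measure.restrict_apply' measurableSet_Icc,
        Set.inter_eq_self_of_subset_left
          (show Set.Ioo t (min (t+δ) b) ⊆ Set.Icc a b from
            fun x hx => ⟨le_trans hta hx.1.le, le_trans hx.2.le (min_le_right _ _)⟩)]
    rw [h2, Real.volume_Ioo] at h1
    have h3 : t < min (t+δ) b := lt_min (by linarith) htb
    simp only [ENNReal.ofReal_eq_zero] at h1
    linarith
  have hmain : eVariationOn γ (Set.Icc a b) ≤ eVariationOn γ S :=
    evar_le_of_right_dense htc.2.1 htc.2.2.1 hSsub hdense
  have hvS : v < eVariationOn γ S := lt_of_lt_of_le hvV hmain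
  have hev := eVariationOn.lowerSemicontinuous_aux
    (F := fun k => γn (φ (ns k))) (p := atTop) (f := γ) (s := S)
    (fun x hx => hx.1) hvS
  obtain ⟨k, hk⟩ := hev.exists
  have : eVariationOn (γn (φ (ns k))) S ≤ eVariationOn (γn (φ (ns k))) (Set.Icc a b) :=
    eVariationOn.mono _ (fun x hx => ⟨(hSsub hx).1.le, (hSsub hx).2.le⟩)
  exact absurd (lt_of_lt_of_le hk (le_trans this (hφv (ns k)).le)) (lt_irrefl v)
end
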